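/- arXiv:1606.03257 — 8 statements merged into one kernel-verified Lean document; each statement's English description precedes it below -/
import Mathlib

section
/- Let G be a finite simple graph and let D be a certified dominating set of G. Then every support vertex of G (i.e., every vertex adjacent to a leaf) belongs to D. -/
open Finset

variable {V : Type*} [Fintype V] [DecidableEq V]

/-- `D` is a dominating set of `G`: every vertex outside `D` has a neighbour in `D`. -/
def IsDomSet (G : SimpleGraph V) (D : Finset V) : Prop :=
  ∀ v ∉ D, ∃ u ∈ D, G.Adj u v

/-- `D` is a certified dominating set of `G`: it is dominating and every vertex of `D`
has either zero or at least two neighbours outside `D`. -/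
def IsCertDomSet (G : SimpleGraph V) [DecidableRel G.Adj] (D : Finset V) : Prop :=
  IsDomSet G D ∧ ∀ v ∈ D, (G.neighborFinset v \ D).card = 0 ∨ 2 ≤ (G.neighborFinset v \ D).card

/-- A leaf is a vertex of degree one. -/
abbrev IsLeaf (G : SimpleGraph V) [DecidableRel G.Adj] (v : V) : Prop := G.degree v = 1

theorem certified_contains_supports (G : SimpleGraph V) [DecidableRel G.Adj]
    (D : Finset V) (hD : IsCertDomSet G D)
    (s : V) (hs : ∃ l, G.Adj s l ∧ IsLeaf G l) : s ∈ D := by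
  obtain ⟨l, hsl, hl⟩ := hs
  by_contra hsD
  -- l's neighborFinset is exactly {s}
  have hsmem : s ∈ G.neighborFinset l := by
    rw [SimpleGraph.mem_neighborFinset]; exact hsl.symm
  have hnb : G.neighborFinset l = {s} := by
    apply Finset.eq_of_subset_of_card_le
    · intro x hx
      simp only [Finset.mem_singleton]
      by_contra hxs
      have : 2 ≤ G.degree l := by
        rw [← SimpleGraph.card_neighborFinset_eq_degree]
        exact Finset.one_lt_card.mpr ⟨x, hx, s, hsmem, hxs⟩
      omega
    · simp [hl]
  by_cases hlD : l ∈ D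
  · rcases hD.2 l hlD with h | h
    · rw [Finset.card_eq_zero] at h
      have : s ∈ G.neighborFinset l \ D := Finset.mem_sdiff.mpr ⟨hsmem, hsD⟩
      simp [h] at this
    · have hsub : G.neighborFinset l \ D ⊆ {s} := by
        rw [hnb]; exact Finset.sdiff_subset
      have := Finset.card_le_card hsub
      simp at this; omega
  · obtain ⟨u, huD, hul⟩ := hD.1 l hlD
    have : u ∈ G.neighborFinset l := by
      rw [SimpleGraph.mem_neighborFinset]; exact hul.symm
    rw [hnb, Finset.mem_singleton] at this
    exact hsD (this ▸ huD)
end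

section
/- Let G be a finite simple graph of order n and let L be the set of all leaves of G whose unique neighbour is a strong support of G. Then γ_cer(G) ≤ n − |L|; in particular, γ_cer(G) ≤ n − 2·|S2(G)|. -/
open Finset

variable {V : Type*} [Fintype V] [DecidableEq V]

/-- The domination number: minimum cardinality of a dominating set. -/
noncomputable def gamma (G : SimpleGraph V) : ℕ :=
  sInf {n | ∃ D : Finset V, IsDomSet G D ∧ D.card = n}

/-- The certified domination number: minimum cardinality of a certified dominating set. -/
noncomputable def gammaCer (G : SimpleGraph V) [DecidableRel G.Adj] : ℕ :=
  sInf {n | ∃ D : Finset V, IsCertDomSet G D ∧ D.card = n}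

/-- The set of leaf-neighbours of a vertex. -/
abbrev leafNbrs (G : SimpleGraph V) [DecidableRel G.Adj] (v : V) : Finset V :=
  (G.neighborFinset v).filter (fun l => G.degree l = 1)

/-- A weak support is a vertex adjacent to exactly one leaf. -/
abbrev IsWeakSupport (G : SimpleGraph V) [DecidableRel G.Adj] (v : V) : Prop :=
  (leafNbrs G v).card = 1

/-- A strong support is a vertex adjacent to at least two leaves. -/
abbrev IsStrongSupport (G : SimpleGraph V) [DecidableRel G.Adj] (v : V) : Prop :=
  2 ≤ (leafNbrs G v).card

theorem gammaCer_le_card_sub_strong_leaves (G : SimpleGraph V) [DecidableRel G.Adj]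
    (L : Finset V)
    (hL : L = univ.filter (fun l => IsLeaf G l ∧ ∃ s ∈ G.neighborFinset l, IsStrongSupport G s)) :
    gammaCer G ≤ Fintype.card V - L.card ∧
      gammaCer G ≤ Fintype.card V - 2 * (univ.filter (fun s => IsStrongSupport G s)).card := by

  have hmemL : ∀ l, l ∈ L ↔ (IsLeaf G l ∧ ∃ s ∈ G.neighborFinset l, IsStrongSupport G s) := by
    intro l; rw [hL]; simp
  have huniq : ∀ l, IsLeaf G l → ∀ a ∈ G.neighborFinset l, ∀ b ∈ G.neighborFinset l, a = b := by
    intro l hl a ha b hb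
    have hc : (G.neighborFinset l).card ≤ 1 := by
      rw [SimpleGraph.card_neighborFinset_eq_degree, hl]
    exact Finset.card_le_one.mp hc a ha b hb
  have hD : IsCertDomSet G (univ \ L) := by
    refine ⟨?_, ?_⟩
    · intro v hv
      have hvL : v ∈ L := by
        by_contra h
        exact hv (mem_sdiff.mpr ⟨mem_univ v, h⟩)
      obtain ⟨hleaf, s, hs, hstrong⟩ := (hmemL v).mp hvL
      refine ⟨s, ?_, ((G.mem_neighborFinset v s).mp hs).symm⟩
      rw [mem_sdiff]
      refine ⟨mem_univ s, fun hsL => ?_⟩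
      obtain ⟨hsleaf, _⟩ := (hmemL s).mp hsL
      have h2 : 2 ≤ (G.neighborFinset s).card :=
        le_trans hstrong (card_le_card (filter_subset _ _))
      rw [SimpleGraph.card_neighborFinset_eq_degree, hsleaf] at h2
      omega
    · intro v hv
      by_cases h : (G.neighborFinset v \ (univ \ L)).card = 0
      · exact Or.inl h
      right
      obtain ⟨l, hl⟩ := Finset.card_pos.mp (Nat.pos_of_ne_zero h)
      rw [mem_sdiff] at hl
      have hlL : l ∈ L := by
        by_contra hcon
        exact hl.2 (mem_sdiff.mpr ⟨mem_univ l, hcon⟩)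
      obtain ⟨hleaf, s, hs, hstrong⟩ := (hmemL l).mp hlL
      have hvmem : v ∈ G.neighborFinset l := by
        rw [SimpleGraph.mem_neighborFinset]
        exact ((G.mem_neighborFinset v l).mp hl.1).symm
      have hsv : s = v := huniq l hleaf s hs v hvmem
      subst hsv
      refine le_trans hstrong (card_le_card ?_)
      intro x hx
      rw [mem_filter] at hx
      rw [mem_sdiff]
      refine ⟨hx.1, ?_⟩
      rw [mem_sdiff]
      push_neg
      intro _
      refine (hmemL x).mpr ⟨hx.2, s, ?_, hstrong⟩
      rw [SimpleGraph.mem_neighborFinset]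
      exact ((G.mem_neighborFinset s x).mp hx.1).symm
  have hle : gammaCer G ≤ Fintype.card V - L.card := by
    have hmem : (univ \ L).card ∈ {n | ∃ D : Finset V, IsCertDomSet G D ∧ D.card = n} :=
      ⟨univ \ L, hD, rfl⟩
    have h : gammaCer G ≤ (univ \ L).card := Nat.sInf_le hmem
    rwa [card_sdiff_of_subset (subset_univ L), card_univ] at h
  have hLS : 2 * (univ.filter (fun s => IsStrongSupport G s)).card ≤ L.card := by
    set S := univ.filter (fun s => IsStrongSupport G s) with hS
    have hdisj : ∀ a ∈ S, ∀ b ∈ S, a ≠ b →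
        Disjoint (leafNbrs G a) (leafNbrs G b) := by
      intro a _ b _ hab
      rw [Finset.disjoint_left]
      intro x hxa hxb
      rw [mem_filter] at hxa hxb
      have haa : a ∈ G.neighborFinset x := by
        rw [SimpleGraph.mem_neighborFinset]
        exact ((G.mem_neighborFinset a x).mp hxa.1).symm
      have hbb : b ∈ G.neighborFinset x := by
        rw [SimpleGraph.mem_neighborFinset]
        exact ((G.mem_neighborFinset b x).mp hxb.1).symm
      exact hab (huniq x hxa.2 a haa b hbb)
    have hsub : S.biUnion (fun s => leafNbrs G s) ⊆ L := by
      intro x hx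
      rw [Finset.mem_biUnion] at hx
      obtain ⟨s, hsS, hxs⟩ := hx
      rw [mem_filter] at hxs
      rw [hS, mem_filter] at hsS
      refine (hmemL x).mpr ⟨hxs.2, s, ?_, hsS.2⟩
      rw [SimpleGraph.mem_neighborFinset]
      exact ((G.mem_neighborFinset s x).mp hxs.1).symm
    calc 2 * S.card = ∑ _s ∈ S, 2 := by rw [Finset.sum_const]; ring
      _ ≤ ∑ s ∈ S, (leafNbrs G s).card :=
          Finset.sum_le_sum (fun s hs => (mem_filter.mp hs).2)
      _ = (S.biUnion (fun s => leafNbrs G s)).card := (Finset.card_biUnion hdisj).symm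
      _ ≤ L.card := card_le_card hsub
  have hLn : L.card ≤ Fintype.card V := by
    rw [← card_univ]; exact card_le_card (subset_univ L)
  exact ⟨hle, le_trans hle (by omega)⟩
end

section
/- If G is a finite connected simple graph, then γ_cer(G) ≤ γ(G) + |S1(G)|, where S1(G) is the set of weak supports of G. -/
open Finset

variable {V : Type*} [Fintype V] [DecidableEq V]

/-!
Among minimum dominating sets `D`, choose one minimising lexicographically the number of leaves
in `D` and then the number of vertices of `D` with exactly one neighbour outside `D`. If such a
vertex `v` had a non-leaf `u` as its outside neighbour, `D - v + u` would again be a minimum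
dominating set: when `v` is a leaf this removes a leaf from `D`, and otherwise minimality of `D`
makes `v` the only neighbour of `u` in `D`, so the swap lowers the second count. Hence all these
outside neighbours are leaves. Each such `v` is then a weak support, since a leaf adjacent to a
vertex of `D` cannot itself lie in `D`, and adding the outside neighbours to `D` yields a
certified dominating set.
-/

open SimpleGraph

set_option linter.unusedSectionVars false

section GammaSet

variable {G : SimpleGraph V} {D : Finset V} {v w : V}

def IsGammaSet (G : SimpleGraph V) (D : Finset V) : Prop :=
  IsDomSet G D ∧ D.card = gamma G

theorem gamma_le_card (hD : IsDomSet G D) : gamma G ≤ D.card :=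
  Nat.sInf_le ⟨D, hD, rfl⟩

theorem gammaCer_le_card [DecidableRel G.Adj] (hD : IsCertDomSet G D) : gammaCer G ≤ D.card :=
  Nat.sInf_le ⟨D, hD, rfl⟩

theorem exists_isGammaSet (G : SimpleGraph V) : ∃ D, IsGammaSet G D :=
  Nat.sInf_mem (s := {n | ∃ D : Finset V, IsDomSet G D ∧ D.card = n})
    ⟨_, univ, fun v hv => absurd (mem_univ v) hv, rfl⟩

theorem IsGammaSet.not_isDomSet_erase (hD : IsGammaSet G D) (hv : v ∈ D) :
    ¬IsDomSet G (D.erase v) := fun h =>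
  (gamma_le_card h).not_gt (hD.2 ▸ card_erase_lt_of_mem hv)

/-- Ore's private neighbour property, for a vertex that is not isolated in `D`. -/
theorem IsGammaSet.exists_private_ext (hD : IsGammaSet G D) (hv : v ∈ D) (hw : w ∈ D)
    (hvw : G.Adj v w) : ∃ z ∉ D, G.Adj v z ∧ ∀ d ∈ D, G.Adj d z → d = v := by
  by_contra! h
  refine hD.not_isDomSet_erase hv fun z hz => ?_
  by_cases hzv : z = v
  · exact ⟨w, mem_erase.mpr ⟨hvw.ne', hw⟩, hzv ▸ hvw.symm⟩
  have hzD : z ∉ D := fun h' => hz (mem_erase.mpr ⟨hzv, h'⟩)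
  obtain ⟨d, hd, hdz⟩ := hD.1 z hzD
  by_cases hdv : d = v
  · obtain ⟨d', hd', hd'z, hd'v⟩ := h z hzD (hdv ▸ hdz)
    exact ⟨d', mem_erase.mpr ⟨hd'v, hd'⟩, hd'z⟩
  · exact ⟨d, mem_erase.mpr ⟨hdv, hd⟩, hdz⟩

end GammaSet

section Swap

variable {G : SimpleGraph V} [DecidableRel G.Adj] {D : Finset V} {l u v x : V}

theorem eq_of_adj_of_isLeaf (hv : IsLeaf G v) (hu : G.Adj v u) (hx : G.Adj v x) : x = u :=
  (degree_eq_one_iff_existsUnique_adj.mp hv).unique hx hu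

theorem exists_adj_ne_of_not_isLeaf (hv : ¬IsLeaf G v) (hu : G.Adj v u) :
    ∃ w, G.Adj v w ∧ w ≠ u := by
  have hpos := G.degree_pos_iff_exists_adj v |>.mpr ⟨u, hu⟩
  have hcard : 1 < (G.neighborFinset v).card := by
    rw [card_neighborFinset_eq_degree]
    omega
  obtain ⟨w, hw, hwu⟩ := exists_mem_ne hcard u
  exact ⟨w, (mem_neighborFinset G v w).mp hw, hwu⟩

theorem adj_of_neighborFinset_sdiff_eq_singleton (h : G.neighborFinset v \ D = {u}) :
    G.Adj v u ∧ u ∉ D := by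
  have hu : u ∈ G.neighborFinset v \ D := h ▸ mem_singleton_self u
  simpa using hu

theorem eq_of_neighborFinset_sdiff_eq_singleton (h : G.neighborFinset v \ D = {u})
    (hx : G.Adj v x) (hxD : x ∉ D) : x = u :=
  mem_singleton.mp (h ▸ by simpa using ⟨hx, hxD⟩)

theorem one_lt_card_neighborFinset_sdiff {a b : V} (ha : G.Adj x a) (hb : G.Adj x b)
    (haD : a ∉ D) (hbD : b ∉ D) (hab : a ≠ b) : 1 < (G.neighborFinset x \ D).card :=
  one_lt_card.mpr ⟨a, by simpa using ⟨ha, haD⟩, b, by simpa using ⟨hb, hbD⟩, hab⟩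

def singleExtSet (G : SimpleGraph V) [DecidableRel G.Adj] (D : Finset V) : Finset V :=
  D.filter fun v => (G.neighborFinset v \ D).card = 1

def singleExtNbrs (G : SimpleGraph V) [DecidableRel G.Adj] (D : Finset V) : Finset V :=
  (singleExtSet G D).biUnion fun v => G.neighborFinset v \ D

theorem mem_singleExtNbrs :
    u ∈ singleExtNbrs G D ↔ ∃ v ∈ D, G.neighborFinset v \ D = {u} := by
  refine ⟨fun hu => ?_, fun ⟨v, hvD, hvu⟩ => ?_⟩
  · obtain ⟨v, hv, huv⟩ := mem_biUnion.mp hu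
    obtain ⟨hvD, hv1⟩ := mem_filter.mp hv
    obtain ⟨b, hb⟩ := card_eq_one.mp hv1
    have hub : u = b := mem_singleton.mp (hb ▸ huv)
    exact ⟨v, hvD, hub ▸ hb⟩
  · exact mem_biUnion.mpr ⟨v, mem_filter.mpr ⟨hvD, by rw [hvu, card_singleton]⟩,
      hvu ▸ mem_singleton_self u⟩

theorem card_singleExtNbrs_le : (singleExtNbrs G D).card ≤ (singleExtSet G D).card :=
  (card_biUnion_le_card_mul _ _ 1 fun _ hv => (mem_filter.mp hv).2.le).trans_eq (mul_one _)

theorem IsDomSet.swap (hD : IsDomSet G D) (hvu : G.neighborFinset v \ D = {u}) :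
    IsDomSet G (insert u (D.erase v)) := by
  intro x hx
  by_cases hxv : x = v
  · exact ⟨u, mem_insert_self _ _,
      hxv ▸ (adj_of_neighborFinset_sdiff_eq_singleton hvu).1.symm⟩
  have hxu : x ≠ u := fun h => hx (h ▸ mem_insert_self _ _)
  have hxD : x ∉ D := fun h => hx (mem_insert_of_mem (mem_erase.mpr ⟨hxv, h⟩))
  obtain ⟨d, hd, hdx⟩ := hD x hxD
  have hdv : d ≠ v := by
    rintro rfl
    exact hxu (eq_of_neighborFinset_sdiff_eq_singleton hvu hdx hxD)
  exact ⟨d, mem_insert_of_mem (mem_erase.mpr ⟨hdv, hd⟩), hdx⟩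

theorem IsGammaSet.swap (hD : IsGammaSet G D) (hv : v ∈ D)
    (hvu : G.neighborFinset v \ D = {u}) : IsGammaSet G (insert u (D.erase v)) := by
  refine ⟨hD.1.swap hvu, ?_⟩
  have huD := (adj_of_neighborFinset_sdiff_eq_singleton hvu).2
  rw [card_insert_of_notMem fun h => huD (mem_of_mem_erase h), card_erase_add_one hv, hD.2]

theorem IsGammaSet.notMem_of_adj_of_isLeaf (hD : IsGammaSet G D) (hvD : v ∈ D)
    (hl : IsLeaf G l) (hvl : G.Adj v l) : l ∉ D := fun hlD => by
  obtain ⟨z, hzD, hlz, -⟩ := hD.exists_private_ext hlD hvD hvl.symm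
  exact hzD (eq_of_adj_of_isLeaf hl hvl.symm hlz ▸ hvD)

theorem IsGammaSet.eq_of_adj_of_neighborFinset_sdiff_eq_singleton (hD : IsGammaSet G D)
    (hvD : v ∈ D) (hvu : G.neighborFinset v \ D = {u}) (hv : ¬IsLeaf G v) :
    ∀ d ∈ D, G.Adj d u → d = v := by
  intro d hd hdu
  obtain ⟨w, hw, hwu⟩ :=
    exists_adj_ne_of_not_isLeaf hv (adj_of_neighborFinset_sdiff_eq_singleton hvu).1
  have hwD : w ∈ D := by
    by_contra hwD
    exact hwu (eq_of_neighborFinset_sdiff_eq_singleton hvu hw hwD)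
  obtain ⟨z, hzD, hvz, hz⟩ := hD.exists_private_ext hvD hwD hw
  exact hz d hd (eq_of_neighborFinset_sdiff_eq_singleton hvu hvz hzD ▸ hdu)

theorem filter_isLeaf_swap (hu : ¬IsLeaf G u) :
    (insert u (D.erase v)).filter (IsLeaf G) = (D.filter (IsLeaf G)).erase v := by
  rw [filter_insert, if_neg hu, filter_erase]

theorem IsGammaSet.singleExtSet_swap_subset (hD : IsGammaSet G D) (hvD : v ∈ D)
    (hvu : G.neighborFinset v \ D = {u}) (hu : ¬IsLeaf G u) (hv : ¬IsLeaf G v) :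
    singleExtSet G (insert u (D.erase v)) ⊆ (singleExtSet G D).erase v := by
  obtain ⟨hvu', huD⟩ := adj_of_neighborFinset_sdiff_eq_singleton hvu
  have hu_only := hD.eq_of_adj_of_neighborFinset_sdiff_eq_singleton hvD hvu hv
  set D' := insert u (D.erase v)
  have hvD' : v ∉ D' := by simp [D', hvu'.ne]
  intro x hx
  obtain ⟨hxD', hx1⟩ := mem_filter.mp hx
  rcases mem_insert.mp hxD' with rfl | hx
  · obtain ⟨z, hxz, hzv⟩ := exists_adj_ne_of_not_isLeaf hu hvu'.symm
    have hzD' : z ∉ D' := by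
      simpa [D', hxz.ne'] using fun _ hzD => hzv (hu_only z hzD hxz.symm)
    exact absurd hx1 (one_lt_card_neighborFinset_sdiff hvu'.symm hxz hvD' hzD' hzv.symm).ne'
  obtain ⟨hxv, hxD⟩ := mem_erase.mp hx
  have hxu : ¬G.Adj x u := fun h => hxv (hu_only x hxD h)
  by_cases hxv' : G.Adj x v
  · obtain ⟨y, hyD, hxy, -⟩ := hD.exists_private_ext hxD hvD hxv'
    have hyD' : y ∉ D' := by
      simp only [D', mem_insert, mem_erase, hyD, and_false, or_false]
      rintro rfl
      exact hxu hxy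
    exact absurd hx1 (one_lt_card_neighborFinset_sdiff hxv' hxy hvD' hyD'
      fun h => hyD (h ▸ hvD)).ne'
  have hext : G.neighborFinset x \ D' = G.neighborFinset x \ D := by
    ext y
    simp only [mem_sdiff, mem_neighborFinset, D', mem_insert, mem_erase]
    refine and_congr_right fun hxy => ?_
    have hyu : y ≠ u := fun h => hxu (h ▸ hxy)
    have hyv : y ≠ v := fun h => hxv' (h ▸ hxy)
    simp [hyu, hyv]
  exact mem_erase.mpr ⟨hxv, mem_filter.mpr ⟨hxD, hext ▸ hx1⟩⟩

theorem IsGammaSet.swap_lt (hD : IsGammaSet G D) (hvD : v ∈ D)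
    (hvu : G.neighborFinset v \ D = {u}) (hu : ¬IsLeaf G u) :
    toLex (((insert u (D.erase v)).filter (IsLeaf G)).card,
        (singleExtSet G (insert u (D.erase v))).card) <
      toLex ((D.filter (IsLeaf G)).card, (singleExtSet G D).card) := by
  rw [Prod.Lex.toLex_lt_toLex, filter_isLeaf_swap hu]
  by_cases hv : IsLeaf G v
  · exact Or.inl (card_erase_lt_of_mem (mem_filter.mpr ⟨hvD, hv⟩))
  refine Or.inr ⟨by rw [erase_eq_of_notMem (by simp [hv])], ?_⟩
  calc _ ≤ ((singleExtSet G D).erase v).card :=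
        card_le_card (hD.singleExtSet_swap_subset hvD hvu hu hv)
    _ < _ := card_erase_lt_of_mem (mem_filter.mpr ⟨hvD, by rw [hvu, card_singleton]⟩)

theorem exists_isGammaSet_forall_singleExtNbrs_isLeaf (G : SimpleGraph V) [DecidableRel G.Adj] :
    ∃ D, IsGammaSet G D ∧ ∀ u ∈ singleExtNbrs G D, IsLeaf G u := by
  obtain ⟨D, hD, hmin⟩ := Set.exists_min_image {D | IsGammaSet G D}
    (fun D => toLex ((D.filter (IsLeaf G)).card, (singleExtSet G D).card))
    (Set.toFinite _) (exists_isGammaSet G)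
  refine ⟨D, hD, fun u hu => ?_⟩
  obtain ⟨v, hv, hvu⟩ := mem_singleExtNbrs.mp hu
  by_contra hu
  exact (hmin _ (hD.swap hv hvu)).not_gt (hD.swap_lt hv hvu hu)

theorem neighborFinset_sdiff_union_singleExtNbrs (hleaf : ∀ u ∈ singleExtNbrs G D, IsLeaf G u)
    (hx1 : (G.neighborFinset x \ D).card ≠ 1) :
    G.neighborFinset x \ (D ∪ singleExtNbrs G D) = G.neighborFinset x \ D := by
  refine Subset.antisymm (sdiff_subset_sdiff subset_rfl subset_union_left) fun y hy => ?_
  obtain ⟨hxy, hyD⟩ := mem_sdiff.mp hy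
  refine mem_sdiff.mpr ⟨hxy, fun hyDA => (mem_union.mp hyDA).elim hyD fun hyA => ?_⟩
  obtain ⟨v, -, hvy⟩ := mem_singleExtNbrs.mp hyA
  have hxv : x = v := eq_of_adj_of_isLeaf (hleaf y hyA)
    (adj_of_neighborFinset_sdiff_eq_singleton hvy).1.symm ((mem_neighborFinset _ _ _).mp hxy).symm
  subst hxv
  exact hx1 (by rw [hvy, card_singleton])

theorem IsDomSet.isCertDomSet_union_singleExtNbrs (hD : IsDomSet G D)
    (hleaf : ∀ u ∈ singleExtNbrs G D, IsLeaf G u) :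
    IsCertDomSet G (D ∪ singleExtNbrs G D) := by
  refine ⟨fun x hx => ?_, fun x hx => ?_⟩
  · obtain ⟨d, hd, hdx⟩ := hD x fun h => hx (mem_union_left _ h)
    exact ⟨d, mem_union_left _ hd, hdx⟩
  rcases mem_union.mp hx with hxD | hxA
  · rcases Nat.lt_trichotomy (G.neighborFinset x \ D).card 1 with h0 | h1 | h2
    · refine Or.inl (Nat.eq_zero_of_le_zero ?_)
      exact (card_le_card (sdiff_subset_sdiff subset_rfl subset_union_left)).trans (by omega)
    · refine Or.inl (card_eq_zero.mpr (sdiff_eq_empty_iff_subset.mpr fun y hy => ?_))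
      by_cases hyD : y ∈ D
      · exact mem_union_left _ hyD
      exact mem_union_right _ (subset_biUnion_of_mem (fun v => G.neighborFinset v \ D)
        (mem_filter.mpr ⟨hxD, h1⟩) (mem_sdiff.mpr ⟨hy, hyD⟩))
    · exact Or.inr (neighborFinset_sdiff_union_singleExtNbrs hleaf h2.ne' ▸ h2)
  · obtain ⟨v, hvD, hvx⟩ := mem_singleExtNbrs.mp hxA
    refine Or.inl (card_eq_zero.mpr (sdiff_eq_empty_iff_subset.mpr fun y hy => ?_))
    rw [eq_of_adj_of_isLeaf (hleaf x hxA) (adj_of_neighborFinset_sdiff_eq_singleton hvx).1.symm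
      ((mem_neighborFinset _ _ _).mp hy)]
    exact mem_union_left _ hvD

theorem IsGammaSet.singleExtSet_subset_weakSupports (hD : IsGammaSet G D)
    (hleaf : ∀ u ∈ singleExtNbrs G D, IsLeaf G u) :
    singleExtSet G D ⊆ univ.filter (IsWeakSupport G) := by
  intro v hv
  obtain ⟨hvD, hv1⟩ := mem_filter.mp hv
  obtain ⟨u, hu⟩ := card_eq_one.mp hv1
  have hleafNbrs : leafNbrs G v = {u} := by
    refine eq_singleton_iff_unique_mem.mpr ⟨mem_filter.mpr ⟨?_, hleaf u
      (mem_singleExtNbrs.mpr ⟨v, hvD, hu⟩)⟩, fun l hl => ?_⟩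
    · exact (mem_neighborFinset _ _ _).mpr (adj_of_neighborFinset_sdiff_eq_singleton hu).1
    obtain ⟨hvl, hl⟩ := mem_filter.mp hl
    rw [mem_neighborFinset] at hvl
    exact eq_of_neighborFinset_sdiff_eq_singleton hu hvl (hD.notMem_of_adj_of_isLeaf hvD hl hvl)
  exact mem_filter.mpr ⟨mem_univ v, by rw [IsWeakSupport, hleafNbrs, card_singleton]⟩

end Swap

theorem gammaCer_le_gamma_add_weakSupports_general (G : SimpleGraph V) [DecidableRel G.Adj] :
    gammaCer G ≤ gamma G + (univ.filter (fun s => IsWeakSupport G s)).card := by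
  obtain ⟨D, hD, hleaf⟩ := exists_isGammaSet_forall_singleExtNbrs_isLeaf G
  calc gammaCer G ≤ (D ∪ singleExtNbrs G D).card :=
        gammaCer_le_card (hD.1.isCertDomSet_union_singleExtNbrs hleaf)
    _ ≤ D.card + (singleExtSet G D).card :=
        (card_union_le _ _).trans (Nat.add_le_add_left card_singleExtNbrs_le _)
    _ ≤ gamma G + (univ.filter (fun s => IsWeakSupport G s)).card := by
        rw [hD.2]
        exact Nat.add_le_add_left (card_le_card (hD.singleExtSet_subset_weakSupports hleaf)) _

theorem gammaCer_le_gamma_add_weakSupports (G : SimpleGraph V) [DecidableRel G.Adj]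
    (hconn : G.Connected) :
    gammaCer G ≤ gamma G + (univ.filter (fun s => IsWeakSupport G s)).card :=
  gammaCer_le_gamma_add_weakSupports_general G
end

section
/- If G is a finite simple graph with minimum degree δ(G) ≥ 2, then γ_cer(G) = γ(G). -/
open Finset

variable {V : Type*} [Fintype V] [DecidableEq V]

section Aux

variable (G : SimpleGraph V) [DecidableRel G.Adj]

lemma aux_domset_univ : IsDomSet G (univ : Finset V) := fun v hv => absurd (mem_univ v) hv

lemma aux_gamma_le {D : Finset V} (hD : IsDomSet G D) : gamma G ≤ D.card :=
  Nat.sInf_le ⟨D, hD, rfl⟩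

lemma aux_exists_gamma_set : ∃ D : Finset V, IsDomSet G D ∧ D.card = gamma G := by
  have hne : {n | ∃ D : Finset V, IsDomSet G D ∧ D.card = n}.Nonempty :=
    ⟨(univ : Finset V).card, univ, aux_domset_univ G, rfl⟩
  exact Nat.sInf_mem hne

lemma aux_two_le_card {s : Finset V} {a b : V} (ha : a ∈ s) (hb : b ∈ s) (hab : a ≠ b) :
    2 ≤ s.card := by
  have hsub : ({a, b} : Finset V) ⊆ s := by
    intro t ht
    rcases mem_insert.mp ht with rfl | ht
    · exact ha
    · rwa [mem_singleton.mp ht]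
  calc 2 = ({a, b} : Finset V).card := (card_pair hab).symm
    _ ≤ s.card := card_le_card hsub

/-- In a minimum dominating set, no vertex with positive degree has zero external
neighbours. -/
lemma aux_ext_nonempty {D : Finset V} (hD : IsDomSet G D) (hcard : D.card = gamma G)
    {w : V} (hw : w ∈ D) (hdeg : 0 < G.degree w) :
    (G.neighborFinset w \ D).Nonempty := by
  by_contra hne
  have hsub : G.neighborFinset w ⊆ D := by
    intro t ht
    by_contra htD
    exact hne ⟨t, mem_sdiff.2 ⟨ht, htD⟩⟩
  have hdom : IsDomSet G (D.erase w) := by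
    intro t ht
    by_cases htw : t = w
    · subst htw
      have hpos : 0 < (G.neighborFinset t).card := by
        rwa [SimpleGraph.card_neighborFinset_eq_degree]
      obtain ⟨s, hs⟩ := card_pos.mp hpos
      have hadj : G.Adj t s := (SimpleGraph.mem_neighborFinset G t s).mp hs
      exact ⟨s, mem_erase.2 ⟨hadj.ne', hsub hs⟩, hadj.symm⟩
    · have htD : t ∉ D := fun hmem => ht (mem_erase.2 ⟨htw, hmem⟩)
      obtain ⟨d, hdD, hadj⟩ := hD t htD
      have hdw : d ≠ w := by
        rintro rfl
        exact htD (hsub ((SimpleGraph.mem_neighborFinset G d t).mpr hadj))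
      exact ⟨d, mem_erase.2 ⟨hdw, hdD⟩, hadj⟩
  have h1 : gamma G ≤ (D.erase w).card := aux_gamma_le G hdom
  have h2 : (D.erase w).card = D.card - 1 := card_erase_of_mem hw
  have h3 : 0 < D.card := card_pos.mpr ⟨w, hw⟩
  omega

lemma aux_descent (h2 : ∀ v : V, 2 ≤ G.degree v) {D : Finset V}
    (hD : IsDomSet G D) (hcard : D.card = gamma G)
    {v : V} (hvD : v ∈ D) (hv1 : (G.neighborFinset v \ D).card = 1) :
    ∃ D' : Finset V, IsDomSet G D' ∧ D'.card = gamma G ∧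
      (D'.filter fun z => (G.neighborFinset z \ D').card = 1).card
        < (D.filter fun z => (G.neighborFinset z \ D).card = 1).card := by
  classical
  obtain ⟨u, hu⟩ := card_eq_one.mp hv1
  have huext : u ∈ G.neighborFinset v \ D := hu ▸ mem_singleton_self u
  have hvu : G.Adj v u := (SimpleGraph.mem_neighborFinset G v u).mp (mem_sdiff.mp huext).1
  have huD : u ∉ D := (mem_sdiff.mp huext).2
  have huv : u ≠ v := hvu.ne'
  have honly : ∀ t, G.Adj v t → t ∉ D → t = u := by
    intro t hadj htD
    have ht : t ∈ G.neighborFinset v \ D :=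
      mem_sdiff.2 ⟨(SimpleGraph.mem_neighborFinset G v t).mpr hadj, htD⟩
    rw [hu] at ht
    exact mem_singleton.mp ht
  have hvbad : v ∈ D.filter fun z => (G.neighborFinset z \ D).card = 1 :=
    mem_filter.2 ⟨hvD, hv1⟩
  -- v has a neighbour s inside D
  have hsex : ∃ s, s ∈ D ∧ s ≠ v ∧ G.Adj v s := by
    have hint : (G.neighborFinset v ∩ D).Nonempty := by
      have htot := card_inter_add_card_sdiff (G.neighborFinset v) D
      have hdeg : 2 ≤ (G.neighborFinset v).card := by
        rw [SimpleGraph.card_neighborFinset_eq_degree]; exact h2 v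
      rw [← card_pos]; rw [hv1] at htot
      omega
    obtain ⟨s, hs⟩ := hint
    have hadj : G.Adj v s := (SimpleGraph.mem_neighborFinset G v s).mp (mem_inter.mp hs).1
    exact ⟨s, (mem_inter.mp hs).2, hadj.ne', hadj⟩
  obtain ⟨s, hsD, hsv, hvs⟩ := hsex
  have hDpos : 0 < D.card := card_pos.mpr ⟨v, hvD⟩
  -- Case 0 : all neighbours of u are in D ∪ {v} : contradiction with minimality
  by_cases hcase0 : ∀ x, G.Adj u x → x ∈ D ∨ x = v
  · exfalso
    have hdom : IsDomSet G (D.erase v) := by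
      intro t ht
      by_cases htv : t = v
      · subst htv
        exact ⟨s, mem_erase.2 ⟨hsv, hsD⟩, hvs.symm⟩
      · by_cases htu : t = u
        · subst htu
          have hdeg : 2 ≤ (G.neighborFinset t).card := by
            rw [SimpleGraph.card_neighborFinset_eq_degree]; exact h2 t
          obtain ⟨a, ha, b, hb, hab⟩ := one_lt_card.mp hdeg
          have hchoose : ∃ c ∈ G.neighborFinset t, c ≠ v := by
            by_cases hav : a = v
            · exact ⟨b, hb, fun hbv => hab (by rw [hav, hbv])⟩
            · exact ⟨a, ha, hav⟩
          obtain ⟨c, hc, hcv⟩ := hchoose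
          have hadj : G.Adj t c := (SimpleGraph.mem_neighborFinset G t c).mp hc
          have hcD : c ∈ D := by
            rcases hcase0 c hadj with h | h
            · exact h
            · exact absurd h hcv
          exact ⟨c, mem_erase.2 ⟨hcv, hcD⟩, hadj.symm⟩
        · have htD : t ∉ D := fun hmem => ht (mem_erase.2 ⟨htv, hmem⟩)
          obtain ⟨d, hdD, hadj⟩ := hD t htD
          have hdv : d ≠ v := by
            rintro rfl
            exact htu (honly t hadj htD)
          exact ⟨d, mem_erase.2 ⟨hdv, hdD⟩, hadj⟩
    have h1 : gamma G ≤ (D.erase v).card := aux_gamma_le G hdom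
    have h2' : (D.erase v).card = D.card - 1 := card_erase_of_mem hvD
    omega
  push_neg at hcase0
  obtain ⟨x, hxadj, hx⟩ := hcase0
  obtain ⟨hxD, hxv⟩ : x ∉ D ∧ x ≠ v := hx
  have hxu : x ≠ u := hxadj.ne'
  -- split on existence of the troublesome w
  by_cases hwex : ∃ w, w ∈ D ∧ w ≠ v ∧ G.Adj w u ∧ ¬ G.Adj w v ∧
      (G.neighborFinset w \ D).card = 2
  · -- Case B : troublesome w exists
    obtain ⟨w, hwD, hwv, hwu, hwnv, hw2⟩ := hwex
    have huextw : u ∈ G.neighborFinset w \ D :=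
      mem_sdiff.2 ⟨(SimpleGraph.mem_neighborFinset G w u).mpr hwu, huD⟩
    -- extract y with ext(w) = {u, y}
    obtain ⟨a, b, hab, hpair⟩ := card_eq_two.mp hw2
    have hyex : ∃ y, y ≠ u ∧ y ∈ G.neighborFinset w \ D ∧
        G.neighborFinset w \ D = {u, y} := by
      rw [hpair] at huextw ⊢
      rcases mem_insert.mp huextw with rfl | hmem
      · exact ⟨b, fun hby => hab hby.symm, mem_insert_of_mem (mem_singleton_self b), rfl⟩
      · have hbu : b = u := (mem_singleton.mp hmem).symm
        subst hbu
        exact ⟨a, hab, mem_insert_self a _, by rw [pair_comm]⟩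
    obtain ⟨y, hyu, hyext, hextw⟩ := hyex
    have hwy : G.Adj w y := (SimpleGraph.mem_neighborFinset G w y).mp (mem_sdiff.mp hyext).1
    have hyD : y ∉ D := (mem_sdiff.mp hyext).2
    have hyv : y ≠ v := fun h => hyD (h ▸ hvD)
    have hyw : y ≠ w := hwy.ne'
    have hvny : ¬ G.Adj v y := fun hadj => hyu (honly y hadj hyD)
    have huw : u ≠ w := fun h => huD (h ▸ hwD)
    have hvw : v ≠ w := fun h => hwv h.symm
    have hsw : s ≠ w := by
      rintro rfl
      exact hwnv hvs.symm
    set E := (D.erase v).erase w with hE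
    have hsE : s ∈ E := mem_erase.2 ⟨hsw, mem_erase.2 ⟨hsv, hsD⟩⟩
    have hvE : v ∉ E := fun h => (mem_erase.mp (mem_of_mem_erase h)).1 rfl
    have hwE : w ∉ E := fun h => (mem_erase.mp h).1 rfl
    have huE : u ∉ E := fun h => huD (mem_of_mem_erase (mem_of_mem_erase h))
    have hyE : y ∉ E := fun h => hyD (mem_of_mem_erase (mem_of_mem_erase h))
    have hEsub : E ⊆ D := fun t ht => mem_of_mem_erase (mem_of_mem_erase ht)
    have hEmem : ∀ t, t ∈ E ↔ t ≠ w ∧ t ≠ v ∧ t ∈ D := by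
      intro t
      simp [hE, mem_erase, and_assoc]
    have hcardE : E.card = D.card - 2 := by
      rw [hE, card_erase_of_mem (mem_erase.2 ⟨hwv, hwD⟩), card_erase_of_mem hvD]
      omega
    have hDcard2 : 2 ≤ D.card := aux_two_le_card hvD hwD hvw
    -- generic domination of "other" vertices
    have hother : ∀ t, t ∉ D → t ≠ u → t ≠ y → ∃ d ∈ E, G.Adj d t := by
      intro t htD htu hty
      obtain ⟨d, hdD, hadj⟩ := hD t htD
      have hdv : d ≠ v := by
        rintro rfl
        exact htu (honly t hadj htD)
      have hdw : d ≠ w := by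
        rintro rfl
        have hmem : t ∈ G.neighborFinset d \ D :=
          mem_sdiff.2 ⟨(SimpleGraph.mem_neighborFinset _ _ _).mpr hadj, htD⟩
        rw [hextw] at hmem
        rcases mem_insert.mp hmem with h | h
        · exact htu h
        · exact hty (mem_singleton.mp h)
      exact ⟨d, (hEmem d).2 ⟨hdw, hdv, hdD⟩, hadj⟩
    by_cases hB0 : G.Adj u y ∨ ∃ r, r ∈ D ∧ r ≠ w ∧ G.Adj y r
    · exfalso
      have hdom : IsDomSet G (insert u E) := by
        intro t ht
        have htu : t ≠ u := fun h => ht (h ▸ mem_insert_self u E)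
        by_cases htv : t = v
        · subst htv; exact ⟨u, mem_insert_self u E, hvu.symm⟩
        by_cases htw : t = w
        · subst htw; exact ⟨u, mem_insert_self u E, hwu.symm⟩
        by_cases hty : t = y
        · subst hty
          rcases hB0 with h | ⟨r, hrD, hrw, hadj⟩
          · exact ⟨u, mem_insert_self u E, h⟩
          · have hrv : r ≠ v := by
              rintro rfl; exact hvny hadj.symm
            exact ⟨r, mem_insert_of_mem ((hEmem r).2 ⟨hrw, hrv, hrD⟩), hadj.symm⟩
        · have htD : t ∉ D := by
            intro hmem
            exact ht (mem_insert_of_mem ((hEmem t).2 ⟨htw, htv, hmem⟩))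
          obtain ⟨d, hdE, hadj⟩ := hother t htD htu hty
          exact ⟨d, mem_insert_of_mem hdE, hadj⟩
      have h1 : gamma G ≤ (insert u E).card := aux_gamma_le G hdom
      have h2' : (insert u E).card = E.card + 1 := card_insert_of_notMem huE
      omega
    push_neg at hB0
    obtain ⟨hnuy, hyonly⟩ := hB0
    by_cases hB1 : ∃ r, r ∈ D ∧ r ≠ v ∧ r ≠ w ∧ G.Adj u r
    · exfalso
      obtain ⟨r, hrD, hrv, hrw, hur⟩ := hB1
      have hdom : IsDomSet G (insert y E) := by
        intro t ht
        have hty : t ≠ y := fun h => ht (h ▸ mem_insert_self y E)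
        by_cases htv : t = v
        · subst htv; exact ⟨s, mem_insert_of_mem hsE, hvs.symm⟩
        by_cases htw : t = w
        · subst htw; exact ⟨y, mem_insert_self y E, hwy.symm⟩
        by_cases htu : t = u
        · subst htu
          exact ⟨r, mem_insert_of_mem ((hEmem r).2 ⟨hrw, hrv, hrD⟩), hur.symm⟩
        · have htD : t ∉ D := by
            intro hmem
            exact ht (mem_insert_of_mem ((hEmem t).2 ⟨htw, htv, hmem⟩))
          obtain ⟨d, hdE, hadj⟩ := hother t htD htu hty
          exact ⟨d, mem_insert_of_mem hdE, hadj⟩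
      have h1 : gamma G ≤ (insert y E).card := aux_gamma_le G hdom
      have h2' : (insert y E).card = E.card + 1 := card_insert_of_notMem hyE
      omega
    push_neg at hB1
    -- Case B2 : replace {v, w} by {u, y}
    set Dp := insert u (insert y E) with hDp
    have huDp : u ∈ Dp := mem_insert_self u _
    have hyDp : y ∈ Dp := mem_insert_of_mem (mem_insert_self y _)
    have hvDp : v ∉ Dp := by
      intro h
      rcases mem_insert.mp h with h | h
      · exact huv h.symm
      rcases mem_insert.mp h with h | h
      · exact hyv h.symm
      · exact hvE h
    have hwDp : w ∉ Dp := by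
      intro h
      rcases mem_insert.mp h with h | h
      · exact huw h.symm
      rcases mem_insert.mp h with h | h
      · exact hyw h.symm
      · exact hwE h
    have hdom : IsDomSet G Dp := by
      intro t ht
      have htu : t ≠ u := fun h => ht (h ▸ huDp)
      have hty : t ≠ y := fun h => ht (h ▸ hyDp)
      by_cases htv : t = v
      · subst htv
        exact ⟨s, mem_insert_of_mem (mem_insert_of_mem hsE), hvs.symm⟩
      by_cases htw : t = w
      · subst htw
        exact ⟨u, huDp, hwu.symm⟩
      · have htD : t ∉ D := by
          intro hmem
          exact ht (mem_insert_of_mem (mem_insert_of_mem ((hEmem t).2 ⟨htw, htv, hmem⟩)))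
        obtain ⟨d, hdE, hadj⟩ := hother t htD htu hty
        exact ⟨d, mem_insert_of_mem (mem_insert_of_mem hdE), hadj⟩
    have hcardDp : Dp.card = D.card := by
      have h1 : (insert y E).card = E.card + 1 := card_insert_of_notMem hyE
      have huyE : u ∉ insert y E := by
        intro h
        rcases mem_insert.mp h with h | h
        · exact hyu h.symm
        · exact huE h
      have h2' : Dp.card = (insert y E).card + 1 := card_insert_of_notMem huyE
      omega
    refine ⟨Dp, hdom, by omega, ?_⟩
    have hsubset : (Dp.filter fun z => (G.neighborFinset z \ Dp).card = 1)
        ⊆ (D.filter fun z => (G.neighborFinset z \ D).card = 1).erase v := by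
      intro z hz
      obtain ⟨hzDp, hz1⟩ := mem_filter.mp hz
      by_cases hzu : z = u
      · exfalso
        subst hzu
        have hvmem : v ∈ G.neighborFinset z \ Dp :=
          mem_sdiff.2 ⟨(SimpleGraph.mem_neighborFinset _ _ _).mpr hvu.symm, hvDp⟩
        have hwmem : w ∈ G.neighborFinset z \ Dp :=
          mem_sdiff.2 ⟨(SimpleGraph.mem_neighborFinset _ _ _).mpr hwu.symm, hwDp⟩
        have := aux_two_le_card hvmem hwmem hvw
        omega
      by_cases hzy : z = y
      · exfalso
        subst hzy
        have hwmem : w ∈ G.neighborFinset z \ Dp :=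
          mem_sdiff.2 ⟨(SimpleGraph.mem_neighborFinset _ _ _).mpr hwy.symm, hwDp⟩
        -- a second neighbour of y
        have hdeg : 2 ≤ (G.neighborFinset z).card := by
          rw [SimpleGraph.card_neighborFinset_eq_degree]; exact h2 z
        have hwN : w ∈ G.neighborFinset z :=
          (SimpleGraph.mem_neighborFinset _ _ _).mpr hwy.symm
        obtain ⟨a', ha', b', hb', hab'⟩ := one_lt_card.mp hdeg
        have hchoose : ∃ c ∈ G.neighborFinset z, c ≠ w := by
          by_cases haw : a' = w
          · exact ⟨b', hb', fun hbw => hab' (by rw [haw, hbw])⟩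
          · exact ⟨a', ha', haw⟩
        obtain ⟨c, hcN, hcw⟩ := hchoose
        have hzc : G.Adj z c := (SimpleGraph.mem_neighborFinset _ _ _).mp hcN
        have hcD : c ∉ D := fun hmem => hyonly c hmem hcw hzc
        have hcu : c ≠ u := by
          rintro rfl
          exact hnuy hzc.symm
        have hcy : c ≠ z := hzc.ne'
        have hcDp : c ∉ Dp := by
          intro h
          rcases mem_insert.mp h with h | h
          · exact hcu h
          rcases mem_insert.mp h with h | h
          · exact hcy h
          · exact hcD (hEsub h)
        have hcmem : c ∈ G.neighborFinset z \ Dp := mem_sdiff.2 ⟨hcN, hcDp⟩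
        have := aux_two_le_card hwmem hcmem hcw.symm
        omega
      -- z comes from E
      have hzE : z ∈ E := by
        rcases mem_insert.mp hzDp with h | h
        · exact absurd h hzu
        rcases mem_insert.mp h with h | h
        · exact absurd h hzy
        · exact h
      obtain ⟨hzw, hzv, hzD⟩ := (hEmem z).mp hzE
      have hznu : ¬ G.Adj z u := by
        intro hadj
        exact hB1 z hzD hzv hzw hadj.symm
      have hzny : ¬ G.Adj z y := by
        intro hadj
        exact hyonly z hzD hzw hadj.symm
      have hsub1 : G.neighborFinset z \ D ⊆ G.neighborFinset z \ Dp := by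
        intro t ht
        obtain ⟨htN, htD⟩ := mem_sdiff.mp ht
        have hadj : G.Adj z t := (SimpleGraph.mem_neighborFinset _ _ _).mp htN
        refine mem_sdiff.2 ⟨htN, ?_⟩
        intro h
        rcases mem_insert.mp h with h | h
        · exact hznu (h ▸ hadj)
        rcases mem_insert.mp h with h | h
        · exact hzny (h ▸ hadj)
        · exact htD (hEsub h)
      have hne : (G.neighborFinset z \ D).Nonempty := by
        refine aux_ext_nonempty G hD hcard hzD ?_
        have := h2 z; omega
      have h1le : 1 ≤ (G.neighborFinset z \ D).card := card_pos.mpr hne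
      have hle := card_le_card hsub1
      refine mem_erase.2 ⟨hzv, mem_filter.2 ⟨hzD, ?_⟩⟩
      omega
    calc (Dp.filter fun z => (G.neighborFinset z \ Dp).card = 1).card
        ≤ ((D.filter fun z => (G.neighborFinset z \ D).card = 1).erase v).card :=
          card_le_card hsubset
      _ < (D.filter fun z => (G.neighborFinset z \ D).card = 1).card := by
          rw [card_erase_of_mem hvbad]
          have := card_pos.mpr ⟨v, hvbad⟩
          omega
  · -- Case A : no troublesome w, simple swap D' = D - v + u
    push_neg at hwex
    set D' := insert u (D.erase v) with hD'
    have hvD' : v ∉ D' := by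
      intro h
      rcases mem_insert.mp h with h | h
      · exact huv h.symm
      · exact (mem_erase.mp h).1 rfl
    have huD' : u ∈ D' := mem_insert_self _ _
    have hmemD' : ∀ t, t ∈ D' ↔ t = u ∨ (t ≠ v ∧ t ∈ D) := by
      intro t
      simp [hD', mem_insert, mem_erase]
    have hdom : IsDomSet G D' := by
      intro t ht
      have htu : t ≠ u := fun h => ht (h ▸ huD')
      by_cases htv : t = v
      · subst htv
        exact ⟨u, huD', hvu.symm⟩
      · have htD : t ∉ D := fun hmem => ht ((hmemD' t).2 (Or.inr ⟨htv, hmem⟩))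
        obtain ⟨d, hdD, hadj⟩ := hD t htD
        have hdv : d ≠ v := by
          rintro rfl
          exact htu (honly t hadj htD)
        exact ⟨d, (hmemD' d).2 (Or.inr ⟨hdv, hdD⟩), hadj⟩
    have hcardD' : D'.card = D.card := by
      have h1 : u ∉ D.erase v := fun h => huD (mem_of_mem_erase h)
      rw [hD', card_insert_of_notMem h1, card_erase_of_mem hvD]
      omega
    refine ⟨D', hdom, by omega, ?_⟩
    have hsubset : (D'.filter fun z => (G.neighborFinset z \ D').card = 1)
        ⊆ (D.filter fun z => (G.neighborFinset z \ D).card = 1).erase v := by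
      intro z hz
      obtain ⟨hzD', hz1⟩ := mem_filter.mp hz
      by_cases hzu : z = u
      · exfalso
        subst hzu
        have hvmem : v ∈ G.neighborFinset z \ D' :=
          mem_sdiff.2 ⟨(SimpleGraph.mem_neighborFinset _ _ _).mpr hvu.symm, hvD'⟩
        have hxD' : x ∉ D' := by
          intro h
          rcases (hmemD' x).mp h with h | h
          · exact hxu h
          · exact hxD h.2
        have hxmem : x ∈ G.neighborFinset z \ D' :=
          mem_sdiff.2 ⟨(SimpleGraph.mem_neighborFinset _ _ _).mpr hxadj, hxD'⟩
        have := aux_two_le_card hvmem hxmem (Ne.symm hxv)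
        omega
      have hzvD : z ≠ v ∧ z ∈ D := by
        rcases (hmemD' z).mp hzD' with h | h
        · exact absurd h hzu
        · exact h
      obtain ⟨hzv, hzD⟩ := hzvD
      refine mem_erase.2 ⟨hzv, mem_filter.2 ⟨hzD, ?_⟩⟩
      -- compute the card of ext_D z from ext_D' z
      by_cases hzav : G.Adj z v <;> by_cases hzau : G.Adj z u
      · -- both : same card
        have heq : G.neighborFinset z \ D' = insert v ((G.neighborFinset z \ D).erase u) := by
          ext t
          constructor
          · intro ht
            obtain ⟨htN, htD'⟩ := mem_sdiff.mp ht
            have htu : t ≠ u := fun h => htD' (h ▸ huD')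
            by_cases htv : t = v
            · exact htv ▸ mem_insert_self _ _
            · have htD : t ∉ D := fun hmem => htD' ((hmemD' t).2 (Or.inr ⟨htv, hmem⟩))
              exact mem_insert_of_mem (mem_erase.2 ⟨htu, mem_sdiff.2 ⟨htN, htD⟩⟩)
          · intro ht
            rcases mem_insert.mp ht with rfl | ht
            · exact mem_sdiff.2 ⟨(SimpleGraph.mem_neighborFinset _ _ _).mpr hzav, hvD'⟩
            · obtain ⟨htu, htA⟩ := mem_erase.mp ht
              obtain ⟨htN, htD⟩ := mem_sdiff.mp htA
              refine mem_sdiff.2 ⟨htN, ?_⟩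
              intro h
              rcases (hmemD' t).mp h with h | h
              · exact htu h
              · exact htD h.2
        have humem : u ∈ G.neighborFinset z \ D :=
          mem_sdiff.2 ⟨(SimpleGraph.mem_neighborFinset _ _ _).mpr hzau, huD⟩
        have hvnot : v ∉ (G.neighborFinset z \ D).erase u :=
          fun h => (mem_sdiff.mp (mem_of_mem_erase h)).2 hvD
        rw [heq, card_insert_of_notMem hvnot, card_erase_of_mem humem] at hz1
        have hcpos : 0 < (G.neighborFinset z \ D).card := card_pos.mpr ⟨u, humem⟩
        omega
      · -- z ~ v, z ̸~ u : ext grows by one; zero before is impossible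
        have heq : G.neighborFinset z \ D' = insert v (G.neighborFinset z \ D) := by
          ext t
          constructor
          · intro ht
            obtain ⟨htN, htD'⟩ := mem_sdiff.mp ht
            by_cases htv : t = v
            · exact htv ▸ mem_insert_self _ _
            · have htD : t ∉ D := fun hmem => htD' ((hmemD' t).2 (Or.inr ⟨htv, hmem⟩))
              exact mem_insert_of_mem (mem_sdiff.2 ⟨htN, htD⟩)
          · intro ht
            rcases mem_insert.mp ht with rfl | ht
            · exact mem_sdiff.2 ⟨(SimpleGraph.mem_neighborFinset _ _ _).mpr hzav, hvD'⟩
            · obtain ⟨htN, htD⟩ := mem_sdiff.mp ht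
              have htu : t ≠ u := by
                rintro rfl
                exact hzau ((SimpleGraph.mem_neighborFinset _ _ _).mp htN)
              refine mem_sdiff.2 ⟨htN, ?_⟩
              intro h
              rcases (hmemD' t).mp h with h | h
              · exact htu h
              · exact htD h.2
        have hvnot : v ∉ G.neighborFinset z \ D := fun h => (mem_sdiff.mp h).2 hvD
        rw [heq, card_insert_of_notMem hvnot] at hz1
        exfalso
        have hne : (G.neighborFinset z \ D).Nonempty := by
          refine aux_ext_nonempty G hD hcard hzD ?_
          have := h2 z; omega
        have := card_pos.mpr hne
        omega
      · -- z ̸~ v, z ~ u : ext shrinks by one; two before contradicts hwex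
        have heq : G.neighborFinset z \ D = insert u (G.neighborFinset z \ D') := by
          ext t
          constructor
          · intro ht
            obtain ⟨htN, htD⟩ := mem_sdiff.mp ht
            by_cases htu : t = u
            · exact htu ▸ mem_insert_self _ _
            · refine mem_insert_of_mem (mem_sdiff.2 ⟨htN, ?_⟩)
              intro h
              rcases (hmemD' t).mp h with h | h
              · exact htu h
              · exact htD h.2
          · intro ht
            rcases mem_insert.mp ht with rfl | ht
            · exact mem_sdiff.2 ⟨(SimpleGraph.mem_neighborFinset _ _ _).mpr hzau, huD⟩
            · obtain ⟨htN, htD'⟩ := mem_sdiff.mp ht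
              have htv : t ≠ v := by
                rintro rfl
                exact hzav ((SimpleGraph.mem_neighborFinset _ _ _).mp htN)
              refine mem_sdiff.2 ⟨htN, ?_⟩
              intro hmem
              exact htD' ((hmemD' t).2 (Or.inr ⟨htv, hmem⟩))
        have hunot : u ∉ G.neighborFinset z \ D' := fun h => (mem_sdiff.mp h).2 huD'
        exfalso
        exact hwex z hzD hzv hzau hzav (by rw [heq, card_insert_of_notMem hunot, hz1])
      · -- neither : equal sets
        have heq : G.neighborFinset z \ D' = G.neighborFinset z \ D := by
          ext t
          constructor
          · intro ht
            obtain ⟨htN, htD'⟩ := mem_sdiff.mp ht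
            have htv : t ≠ v := by
              rintro rfl
              exact hzav ((SimpleGraph.mem_neighborFinset _ _ _).mp htN)
            refine mem_sdiff.2 ⟨htN, ?_⟩
            intro hmem
            exact htD' ((hmemD' t).2 (Or.inr ⟨htv, hmem⟩))
          · intro ht
            obtain ⟨htN, htD⟩ := mem_sdiff.mp ht
            have htu : t ≠ u := by
              rintro rfl
              exact hzau ((SimpleGraph.mem_neighborFinset _ _ _).mp htN)
            refine mem_sdiff.2 ⟨htN, ?_⟩
            intro h
            rcases (hmemD' t).mp h with h | h
            · exact htu h
            · exact htD h.2
        rw [heq] at hz1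
        exact hz1
    calc (D'.filter fun z => (G.neighborFinset z \ D').card = 1).card
        ≤ ((D.filter fun z => (G.neighborFinset z \ D).card = 1).erase v).card :=
          card_le_card hsubset
      _ < (D.filter fun z => (G.neighborFinset z \ D).card = 1).card := by
          rw [card_erase_of_mem hvbad]
          have := card_pos.mpr ⟨v, hvbad⟩
          omega

lemma aux_exists_certified (h2 : ∀ v : V, 2 ≤ G.degree v) :
    ∃ C : Finset V, IsCertDomSet G C ∧ C.card = gamma G := by
  suffices H : ∀ n : ℕ, ∀ D : Finset V, IsDomSet G D → D.card = gamma G →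
      (D.filter fun z => (G.neighborFinset z \ D).card = 1).card = n →
      ∃ C : Finset V, IsCertDomSet G C ∧ C.card = gamma G by
    obtain ⟨D, hD, hc⟩ := aux_exists_gamma_set G
    exact H _ D hD hc rfl
  intro n
  induction n using Nat.strong_induction_on with
  | _ n ih =>
    intro D hD hc hbad
    by_cases hne : (D.filter fun z => (G.neighborFinset z \ D).card = 1).Nonempty
    · obtain ⟨v, hv⟩ := hne
      have hvD := (mem_filter.mp hv).1
      have hv1 := (mem_filter.mp hv).2
      obtain ⟨D', hD', hc', hlt⟩ := aux_descent G h2 hD hc hvD hv1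
      exact ih _ (hbad ▸ hlt) D' hD' hc' rfl
    · refine ⟨D, ⟨hD, ?_⟩, hc⟩
      intro z hz
      rcases Nat.eq_zero_or_pos ((G.neighborFinset z \ D).card) with h0 | hpos
      · exact Or.inl h0
      · right
        by_contra hlt
        have h1 : (G.neighborFinset z \ D).card = 1 := by omega
        exact hne ⟨z, mem_filter.2 ⟨hz, h1⟩⟩

lemma aux_cert_univ : IsCertDomSet G (univ : Finset V) := by
  refine ⟨aux_domset_univ G, ?_⟩
  intro z _
  left
  simp

end Aux

theorem gammaCer_eq_gamma_of_minDegree_ge_two (G : SimpleGraph V) [DecidableRel G.Adj]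
    (h : ∀ v : V, 2 ≤ G.degree v) :
    gammaCer G = gamma G := by
  have h1 : gamma G ≤ gammaCer G := by
    have hne : {n | ∃ D : Finset V, IsCertDomSet G D ∧ D.card = n}.Nonempty :=
      ⟨(univ : Finset V).card, univ, aux_cert_univ G, rfl⟩
    obtain ⟨C, hC, hc⟩ := Nat.sInf_mem hne
    calc gamma G ≤ C.card := aux_gamma_le G hC.1
      _ = gammaCer G := hc
  have h2 : gammaCer G ≤ gamma G := by
    obtain ⟨C, hC, hc⟩ := aux_exists_certified G h
    exact hc ▸ Nat.sInf_le ⟨C, hC, rfl⟩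
  omega
end

section
/- If a finite simple graph G has a unique minimum dominating set (i.e., there is exactly one dominating set of G of cardinality γ(G)), then γ_cer(G) = γ(G). -/
open Finset

variable {V : Type*} [Fintype V] [DecidableEq V]

theorem gammaCer_eq_gamma_of_unique_min_domSet (G : SimpleGraph V) [DecidableRel G.Adj]
    (h : ∃! D : Finset V, IsDomSet G D ∧ D.card = gamma G) :
    gammaCer G = gamma G := by
  obtain ⟨D, ⟨hD, hcard⟩, huniq⟩ := h
  -- D is certified
  have hcert : IsCertDomSet G D := by
    refine ⟨hD, fun v hv => ?_⟩
    by_contra hc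
    push_neg at hc
    obtain ⟨h0, h2⟩ := hc
    have h1 : (G.neighborFinset v \ D).card = 1 := by omega
    obtain ⟨u, hu⟩ := Finset.card_eq_one.mp h1
    have huv : G.Adj v u ∧ u ∉ D := by
      have : u ∈ G.neighborFinset v \ D := hu ▸ Finset.mem_singleton_self u
      simpa [SimpleGraph.mem_neighborFinset] using this
    have hune : u ≠ v := fun e => huv.2 (e ▸ hv)
    set D' : Finset V := insert u (D.erase v) with hD'
    have hcard' : D'.card = gamma G := by
      rw [hD', Finset.card_insert_of_notMem (fun hm => huv.2 (Finset.mem_of_mem_erase hm)),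
        Finset.card_erase_of_mem hv]
      have : 1 ≤ D.card := Finset.card_pos.mpr ⟨v, hv⟩
      omega
    have hdom' : IsDomSet G D' := by
      intro w hw
      rcases eq_or_ne w v with rfl | hwv
      · exact ⟨u, Finset.mem_insert_self _ _, huv.1.symm⟩
      · have hwD : w ∉ D := by
          intro hwD
          exact hw (Finset.mem_insert_of_mem (Finset.mem_erase.mpr ⟨hwv, hwD⟩))
        obtain ⟨x, hxD, hxw⟩ := hD w hwD
        rcases eq_or_ne x v with rfl | hxv
        · exfalso
          have : w ∈ G.neighborFinset x \ D := by
            simp [SimpleGraph.mem_neighborFinset, hxw, hwD]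
          rw [hu, Finset.mem_singleton] at this
          exact hw (this ▸ Finset.mem_insert_self _ _)
        · exact ⟨x, Finset.mem_insert_of_mem (Finset.mem_erase.mpr ⟨hxv, hxD⟩), hxw⟩
    have := huniq D' ⟨hdom', hcard'⟩
    apply huv.2
    rw [← this]
    exact Finset.mem_insert_self _ _
  have h1 : gammaCer G ≤ gamma G := Nat.sInf_le ⟨D, hcert, hcard⟩
  have h2 : gamma G ≤ gammaCer G := by
    have hne : {n | ∃ D : Finset V, IsCertDomSet G D ∧ D.card = n}.Nonempty :=
      ⟨D.card, D, hcert, rfl⟩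
    obtain ⟨E, hE, hEc⟩ := Nat.sInf_mem hne
    calc gamma G ≤ E.card := Nat.sInf_le ⟨E, hE.1, rfl⟩
      _ = gammaCer G := hEc
  omega
end

section
/- Let G be a finite connected simple graph of order n that is the corona of some graph, i.e., every vertex of G is either a leaf or is adjacent to exactly one leaf. Then γ_cer(G) = n. -/
open Finset

variable {V : Type*} [Fintype V] [DecidableEq V]

/-- The unique neighbour of a leaf. -/
lemma leaf_nbr_eq {G : SimpleGraph V} [DecidableRel G.Adj] {l u w : V}
    (hl : G.degree l = 1) (hu : G.Adj l u) (hw : G.Adj l w) : u = w := by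
  rw [SimpleGraph.degree, Finset.card_eq_one] at hl
  obtain ⟨a, ha⟩ := hl
  have h1 : u ∈ G.neighborFinset l := by rwa [SimpleGraph.mem_neighborFinset]
  have h2 : w ∈ G.neighborFinset l := by rwa [SimpleGraph.mem_neighborFinset]
  rw [ha, Finset.mem_singleton] at h1 h2
  rw [h1, h2]

/-- No weak support lies outside a certified dominating set. -/
lemma weakSupport_mem {G : SimpleGraph V} [DecidableRel G.Adj] {D : Finset V}
    (hcert : IsCertDomSet G D) {w : V} (hw : IsWeakSupport G w) : w ∈ D := by
  by_contra hwD
  have hpos : 0 < (leafNbrs G w).card := by rw [hw]; norm_num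
  obtain ⟨l, hl⟩ := Finset.card_pos.mp hpos
  rw [Finset.mem_filter, SimpleGraph.mem_neighborFinset] at hl
  obtain ⟨hadj, hdeg⟩ := hl
  by_cases hlD : l ∈ D
  · have hnb : G.neighborFinset l \ D = {w} := by
      ext x
      simp only [Finset.mem_sdiff, SimpleGraph.mem_neighborFinset, Finset.mem_singleton]
      constructor
      · rintro ⟨hx, -⟩; exact (leaf_nbr_eq hdeg hx hadj.symm)
      · rintro rfl; exact ⟨hadj.symm, hwD⟩
    rcases hcert.2 l hlD with h | h <;> rw [hnb, Finset.card_singleton] at h <;> omega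
  · obtain ⟨u, huD, hu⟩ := hcert.1 l hlD
    have : u = w := leaf_nbr_eq hdeg hu.symm hadj.symm
    exact hwD (this ▸ huD)

theorem gammaCer_of_corona (G : SimpleGraph V) [DecidableRel G.Adj]
    (hconn : G.Connected)
    (hcorona : ∀ v : V, IsLeaf G v ∨ IsWeakSupport G v) :
    gammaCer G = Fintype.card V := by
  -- every certified dominating set is the whole vertex set
  have hall : ∀ D : Finset V, IsCertDomSet G D → D = Finset.univ := by
    intro D hcert
    by_contra hne
    have : ∃ v : V, v ∉ D := by
      by_contra h
      push_neg at h
      exact hne (Finset.eq_univ_iff_forall.mpr h)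
    obtain ⟨v, hvD⟩ := this
    rcases hcorona v with hv | hv
    swap
    · exact hvD (weakSupport_mem hcert hv)
    -- v is a leaf outside D; its unique neighbour u lies in D
    obtain ⟨u, huD, hu⟩ := hcert.1 v hvD
    -- u has ≥ 2 neighbours outside D
    have hvmem : v ∈ G.neighborFinset u \ D := by
      simp [SimpleGraph.mem_neighborFinset, hu, hvD]
    rcases hcert.2 u huD with h0 | h2
    · rw [Finset.card_eq_zero] at h0
      rw [h0] at hvmem; simp at hvmem
    · have : ∃ w ∈ G.neighborFinset u \ D, w ≠ v := by
        by_contra h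
        push_neg at h
        have hsub : G.neighborFinset u \ D ⊆ {v} := by
          intro x hx; rw [Finset.mem_singleton]; exact h x hx
        have := Finset.card_le_card hsub
        rw [Finset.card_singleton] at this
        omega
      obtain ⟨w, hw, hwv⟩ := this
      rw [Finset.mem_sdiff, SimpleGraph.mem_neighborFinset] at hw
      rcases hcorona w with hwleaf | hwws
      swap
      · exact hw.2 (weakSupport_mem hcert hwws)
      -- w is a leaf, so u has two leaf neighbours v and w
      have hvleafnbr : v ∈ leafNbrs G u := by
        rw [Finset.mem_filter, SimpleGraph.mem_neighborFinset]
        exact ⟨hu, hv⟩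
      have hwleafnbr : w ∈ leafNbrs G u := by
        rw [Finset.mem_filter, SimpleGraph.mem_neighborFinset]
        exact ⟨hw.1, hwleaf⟩
      have h2le : 2 ≤ (leafNbrs G u).card := by
        have : ({w, v} : Finset V) ⊆ leafNbrs G u := by
          intro x hx
          rcases Finset.mem_insert.mp hx with rfl | hx
          · exact hwleafnbr
          · rw [Finset.mem_singleton] at hx; subst hx; exact hvleafnbr
        calc 2 = ({w, v} : Finset V).card := by rw [Finset.card_insert_of_notMem (by simpa using hwv), Finset.card_singleton]
          _ ≤ _ := Finset.card_le_card this
      rcases hcorona u with huleaf | huws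
      · -- u a leaf but adjacent to two distinct vertices
        exact hwv (leaf_nbr_eq huleaf (hw.1) hu)
      · have h1 : (leafNbrs G u).card = 1 := huws; omega
  have huniv : IsCertDomSet G (Finset.univ : Finset V) := by
    constructor
    · intro v hv; simp at hv
    · intro v _
      left
      rw [Finset.card_eq_zero]
      ext x; simp
  have hmem : Fintype.card V ∈ {n | ∃ D : Finset V, IsCertDomSet G D ∧ D.card = n} := by
    exact ⟨Finset.univ, huniv, Finset.card_univ⟩
  apply le_antisymm
  · exact Nat.sInf_le hmem
  · apply le_csInf ⟨_, hmem⟩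
    rintro n ⟨D, hD, rfl⟩
    rw [hall D hD, Finset.card_univ]
end

section
/- Let G be a finite connected simple graph of order n ≥ 2. If γ_cer(G) = n, then G is the corona of some graph, i.e., every vertex of G is either a leaf or is adjacent to exactly one leaf. -/
open Finset

variable {V : Type*} [Fintype V] [DecidableEq V]

/- ---------- auxiliary material ---------- -/

lemma nbr_of_leaf (G : SimpleGraph V) [DecidableRel G.Adj] {l v : V}
    (hl : G.degree l = 1) (ha : G.Adj l v) : G.neighborFinset l = {v} := by
  obtain ⟨a, hae⟩ := Finset.card_eq_one.mp hl
  have hv : v ∈ G.neighborFinset l := (SimpleGraph.mem_neighborFinset _ _ _).mpr ha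
  rw [hae] at hv ⊢
  simp at hv
  rw [hv]

/-- total number of edges from `D` to its complement (with multiplicity from `D`'s side). -/
def crossS (G : SimpleGraph V) [DecidableRel G.Adj] (D : Finset V) : ℕ :=
  ∑ w ∈ D, (G.neighborFinset w \ D).card

/-- number of leaves inside `D`. -/
def leafct (G : SimpleGraph V) [DecidableRel G.Adj] (D : Finset V) : ℕ :=
  (D.filter (fun x => G.degree x = 1)).card

/-- lexicographic potential: (card, leaf count, minus cross edges). -/
def phiD (G : SimpleGraph V) [DecidableRel G.Adj] (D : Finset V) : ℕ :=
  (D.card * (Fintype.card V + 1) + leafct G D) * (Fintype.card V * Fintype.card V + 1)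
    + (Fintype.card V * Fintype.card V - crossS G D)

lemma leafct_le (G : SimpleGraph V) [DecidableRel G.Adj] (D : Finset V) :
    leafct G D ≤ D.card := Finset.card_le_card (Finset.filter_subset _ _)

lemma crossS_le (G : SimpleGraph V) [DecidableRel G.Adj] (D : Finset V) :
    crossS G D ≤ Fintype.card V * Fintype.card V := by
  have h1 : crossS G D ≤ ∑ _w ∈ D, Fintype.card V :=
    Finset.sum_le_sum (fun w _ => Finset.card_le_univ _)
  have h2 : ∑ _w ∈ D, Fintype.card V = D.card * Fintype.card V := by
    rw [Finset.sum_const, smul_eq_mul]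
  have h3 : D.card ≤ Fintype.card V := Finset.card_le_univ _
  calc crossS G D ≤ D.card * Fintype.card V := by rw [← h2]; exact h1
    _ ≤ Fintype.card V * Fintype.card V := Nat.mul_le_mul_right _ h3

lemma lex_lt {A A' r r' E : ℕ} (h : A' < A) (hr : r' ≤ E) :
    A' * (E + 1) + r' < A * (E + 1) + r := by
  have h1 : (A' + 1) * (E + 1) ≤ A * (E + 1) := Nat.mul_le_mul_right _ h
  nlinarith

lemma phi_lt_of_card_lt (G : SimpleGraph V) [DecidableRel G.Adj] {D D' : Finset V}
    (h : D'.card < D.card) : phiD G D' < phiD G D := by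
  unfold phiD
  exact lex_lt (lex_lt h (le_trans (leafct_le G D') (Finset.card_le_univ _))) (Nat.sub_le _ _)

lemma phi_lt_of_leafct_lt (G : SimpleGraph V) [DecidableRel G.Adj] {D D' : Finset V}
    (hc : D'.card = D.card) (hl : leafct G D' < leafct G D) : phiD G D' < phiD G D := by
  unfold phiD
  rw [hc]
  exact lex_lt (Nat.add_lt_add_left hl _) (Nat.sub_le _ _)

lemma phi_lt_of_cross_gt (G : SimpleGraph V) [DecidableRel G.Adj] {D D' : Finset V}
    (hc : D'.card = D.card) (hl : leafct G D' = leafct G D)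
    (hx : crossS G D < crossS G D') : phiD G D' < phiD G D := by
  unfold phiD
  rw [hc, hl]
  have h1 : crossS G D' ≤ Fintype.card V * Fintype.card V := crossS_le G D'
  omega

theorem corona_of_gammaCer_eq_card (G : SimpleGraph V) [DecidableRel G.Adj]
    (hconn : G.Connected) (hcard : 2 ≤ Fintype.card V)
    (h : gammaCer G = Fintype.card V) :
    ∀ v : V, IsLeaf G v ∨ IsWeakSupport G v := by
  classical
  intro v
  by_contra hv
  push_neg at hv
  obtain ⟨hdeg, hws⟩ := hv
  have hdeg' : G.degree v ≠ 1 := hdeg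
  have hws' : (leafNbrs G v).card ≠ 1 := hws
  -- lower bound coming from `h`
  have hlb : ∀ D : Finset V, IsCertDomSet G D → Fintype.card V ≤ D.card := by
    intro D hD
    have h1 : gammaCer G ≤ D.card := Nat.sInf_le ⟨D, hD, rfl⟩
    rw [h] at h1
    exact h1
  -- every vertex has a neighbour
  have hadj : ∃ u, G.Adj v u := by
    obtain ⟨w, hw⟩ := Fintype.exists_ne_of_one_lt_card (by omega) v
    obtain ⟨p⟩ := hconn.preconnected v w
    cases p with
    | nil => exact absurd rfl hw
    | cons h q => exact ⟨_, h⟩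
  rcases Nat.lt_or_ge (leafNbrs G v).card 2 with hA | hA
  · -- Case B : v has no leaf-neighbour
    have h0 : (leafNbrs G v).card = 0 := by omega
    rw [Finset.card_eq_zero] at h0
    have hdegv : 2 ≤ G.degree v := by
      obtain ⟨u, hu⟩ := hadj
      have h1 : 0 < G.degree v :=
        Finset.card_pos.mpr ⟨u, (SimpleGraph.mem_neighborFinset _ _ _).mpr hu⟩
      omega
    -- pick a dominating set minimizing the potential
    have hUdom : IsDomSet G (univ : Finset V) := fun x hx => absurd (mem_univ x) hx
    obtain ⟨D, hdom, hphiD⟩ :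
        ∃ D : Finset V, IsDomSet G D ∧
          phiD G D = sInf {k | ∃ D : Finset V, IsDomSet G D ∧ phiD G D = k} :=
      Nat.sInf_mem (⟨_, univ, hUdom, rfl⟩ :
        {k | ∃ D : Finset V, IsDomSet G D ∧ phiD G D = k}.Nonempty)
    have hmin : ∀ D' : Finset V, IsDomSet G D' → phiD G D ≤ phiD G D' := by
      intro D' hD'
      rw [hphiD]
      exact Nat.sInf_le ⟨D', hD', rfl⟩
    have hDpos : 0 < D.card → True := fun _ => trivial
    -- Claim 1: every bad vertex has its unique external neighbour a leaf
    have claim1 : ∀ d ∈ D, (G.neighborFinset d \ D).card = 1 →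
        ∃ u, G.neighborFinset d \ D = {u} ∧ G.degree u = 1 := by
      intro d hd hcard1
      obtain ⟨u, hu⟩ := Finset.card_eq_one.mp hcard1
      refine ⟨u, hu, ?_⟩
      by_contra hu1
      have hmem : u ∈ G.neighborFinset d \ D := by
        rw [hu]; exact Finset.mem_singleton_self u
      have huD : u ∉ D := (Finset.mem_sdiff.mp hmem).2
      have hadu : G.Adj d u :=
        (SimpleGraph.mem_neighborFinset _ _ _).mp (Finset.mem_sdiff.mp hmem).1
      have hdegu : 2 ≤ G.degree u := by
        have h1 : 0 < G.degree u :=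
          Finset.card_pos.mpr ⟨d, (SimpleGraph.mem_neighborFinset _ _ _).mpr hadu.symm⟩
        omega
      -- the swap set is dominating
      have hswap_dom : IsDomSet G (insert u (D.erase d)) := by
        intro x hx
        by_cases hxd : x = d
        · subst hxd; exact ⟨u, Finset.mem_insert_self _ _, hadu.symm⟩
        · have hxD : x ∉ D := by
            intro hxD
            exact hx (Finset.mem_insert_of_mem (Finset.mem_erase.mpr ⟨hxd, hxD⟩))
          obtain ⟨z, hz, hzx⟩ := hdom x hxD
          by_cases hzd : z = d
          · subst hzd
            have hxm : x ∈ G.neighborFinset z \ D :=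
              Finset.mem_sdiff.mpr ⟨(SimpleGraph.mem_neighborFinset _ _ _).mpr hzx, hxD⟩
            rw [hu] at hxm
            have hxu : x = u := Finset.mem_singleton.mp hxm
            subst hxu
            exact absurd (Finset.mem_insert_self x (D.erase z)) hx
          · exact ⟨z, Finset.mem_insert_of_mem (Finset.mem_erase.mpr ⟨hzd, hz⟩), hzx⟩
      have huD' : u ∉ D.erase d := fun hm => huD (Finset.mem_of_mem_erase hm)
      have hcard_swap : (insert u (D.erase d)).card = D.card := by
        rw [Finset.card_insert_of_notMem huD', Finset.card_erase_of_mem hd]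
        have h1 : 0 < D.card := Finset.card_pos.mpr ⟨d, hd⟩
        omega
      -- leaf-count decreases if `d` is a leaf
      have hleaf_dec : G.degree d = 1 → leafct G (insert u (D.erase d)) < leafct G D := by
        intro hdd1
        unfold leafct
        rw [Finset.filter_insert, if_neg hu1, Finset.filter_erase,
          Finset.card_erase_of_mem (Finset.mem_filter.mpr ⟨hd, hdd1⟩)]
        have h1 : 0 < (D.filter (fun x => G.degree x = 1)).card :=
          Finset.card_pos.mpr ⟨d, Finset.mem_filter.mpr ⟨hd, hdd1⟩⟩
        omega
      by_cases herase : IsDomSet G (D.erase d)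
      · refine absurd (hmin _ herase) (not_le.mpr (phi_lt_of_card_lt G ?_))
        rw [Finset.card_erase_of_mem hd]
        have h1 : 0 < D.card := Finset.card_pos.mpr ⟨d, hd⟩
        omega
      · unfold IsDomSet at herase
        push_neg at herase
        obtain ⟨x, hx1, hx2⟩ := herase
        by_cases hxd : x = d
        · -- the vertex `d` itself is not dominated by `D \ {d}` : then `d` is a leaf
          subst hxd
          have hdd1 : G.degree x = 1 := by
            have hNd : G.neighborFinset x = G.neighborFinset x \ D := by
              ext y
              simp only [Finset.mem_sdiff]
              refine ⟨fun hy => ⟨hy, fun hyD => ?_⟩, fun hy => hy.1⟩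
              have hadj' : G.Adj y x := ((SimpleGraph.mem_neighborFinset _ _ _).mp hy).symm
              exact hx2 y (Finset.mem_erase.mpr ⟨hadj'.ne, hyD⟩) hadj'
            show (G.neighborFinset x).card = 1
            rw [hNd]
            exact hcard1
          exact absurd (hmin _ hswap_dom)
            (not_le.mpr (phi_lt_of_leafct_lt G hcard_swap (hleaf_dec hdd1)))
        · -- otherwise the non-dominated vertex is `u`
          have hxD : x ∉ D := fun hxD => hx1 (Finset.mem_erase.mpr ⟨hxd, hxD⟩)
          obtain ⟨z, hz, hzx⟩ := hdom x hxD
          have hzd : z = d := by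
            by_contra hzd
            exact hx2 z (Finset.mem_erase.mpr ⟨hzd, hz⟩) hzx
          subst hzd
          have hxu : x = u := by
            have hxm : x ∈ G.neighborFinset z \ D :=
              Finset.mem_sdiff.mpr ⟨(SimpleGraph.mem_neighborFinset _ _ _).mpr hzx, hxD⟩
            rw [hu] at hxm
            exact Finset.mem_singleton.mp hxm
          subst hxu
          -- any vertex of D adjacent to u equals d
          have hNuD : ∀ w ∈ D, G.Adj w x → w = z := by
            intro w hw hwu
            by_contra hwd
            exact hx2 w (Finset.mem_erase.mpr ⟨hwd, hw⟩) hwu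
          by_cases hdd : G.degree z = 1
          · exact absurd (hmin _ hswap_dom)
              (not_le.mpr (phi_lt_of_leafct_lt G hcard_swap (hleaf_dec hdd)))
          · -- leaf count unchanged, cross count strictly increases
            have hle : leafct G (insert x (D.erase z)) = leafct G D := by
              unfold leafct
              have hznot : z ∉ D.filter (fun t => G.degree t = 1) :=
                fun hm => hdd (Finset.mem_filter.mp hm).2
              rw [Finset.filter_insert, if_neg hu1, Finset.filter_erase,
                Finset.erase_eq_of_notMem hznot]
            have hcross : crossS G D < crossS G (insert x (D.erase z)) := by
              have hsum1 : crossS G D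
                  = (∑ w ∈ D.erase z, (G.neighborFinset w \ D).card) + 1 := by
                unfold crossS
                rw [← Finset.sum_erase_add _ _ hd, hcard1]
              have hNu : G.neighborFinset x \ insert x (D.erase z) = G.neighborFinset x := by
                ext y
                simp only [Finset.mem_sdiff, Finset.mem_insert, Finset.mem_erase]
                refine ⟨fun hy => hy.1, fun hy => ⟨hy, ?_⟩⟩
                push_neg
                refine ⟨fun hyx => ?_, fun h1 h2 => ?_⟩
                · exact G.irrefl (hyx ▸ (SimpleGraph.mem_neighborFinset _ _ _).mp hy)
                · exact absurd (hNuD y h2 ((SimpleGraph.mem_neighborFinset _ _ _).mp hy).symm) h1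
              have hsum2 : crossS G (insert x (D.erase z))
                  = G.degree x + ∑ w ∈ D.erase z, (G.neighborFinset w \ insert x (D.erase z)).card := by
                unfold crossS
                rw [Finset.sum_insert huD']
                congr 1
                rw [hNu]
                rfl
              have hterm : ∀ w ∈ D.erase z,
                  (G.neighborFinset w \ D).card ≤ (G.neighborFinset w \ insert x (D.erase z)).card := by
                intro w hw
                apply Finset.card_le_card
                intro y hy
                obtain ⟨hy1, hy2⟩ := Finset.mem_sdiff.mp hy
                refine Finset.mem_sdiff.mpr ⟨hy1, ?_⟩
                simp only [Finset.mem_insert, Finset.mem_erase]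
                push_neg
                refine ⟨fun hyx => ?_, fun h1 h2 => absurd h2 hy2⟩
                subst hyx
                exact (Finset.mem_erase.mp hw).1
                  (hNuD w (Finset.mem_of_mem_erase hw) ((SimpleGraph.mem_neighborFinset _ _ _).mp hy1))
              have hsum3 : ∑ w ∈ D.erase z, (G.neighborFinset w \ D).card
                  ≤ ∑ w ∈ D.erase z, (G.neighborFinset w \ insert x (D.erase z)).card :=
                Finset.sum_le_sum hterm
              omega
            exact absurd (hmin _ hswap_dom)
              (not_le.mpr (phi_lt_of_cross_gt G hcard_swap hle hcross))
    -- the set of leaves privately dominated by bad vertices of D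
    set U : Finset V := univ.filter (fun u => u ∉ D ∧ G.degree u = 1 ∧
        ∃ d ∈ D, G.Adj d u ∧ (G.neighborFinset d \ D).card = 1) with hUdef
    set D2 : Finset V := D ∪ U with hD2def
    have hdom2 : IsDomSet G D2 := by
      intro x hx
      obtain ⟨z, hz, hzx⟩ := hdom x (fun hxD => hx (Finset.mem_union_left _ hxD))
      exact ⟨z, Finset.mem_union_left _ hz, hzx⟩
    have hcert2 : ∀ w ∈ D2, (G.neighborFinset w \ D2).card = 0 ∨
        2 ≤ (G.neighborFinset w \ D2).card := by
      intro w hw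
      by_cases hwD : w ∈ D
      · rcases Nat.lt_or_ge (G.neighborFinset w \ D).card 2 with hc | hc
        · left
          rw [Finset.card_eq_zero]
          rcases Nat.lt_or_ge (G.neighborFinset w \ D).card 1 with hc0 | hc1
          · have h0' : G.neighborFinset w \ D = ∅ := Finset.card_eq_zero.mp (by omega)
            have hsub : G.neighborFinset w \ D2 ⊆ G.neighborFinset w \ D :=
              Finset.sdiff_subset_sdiff (Finset.Subset.refl _) Finset.subset_union_left
            rw [h0'] at hsub
            exact Finset.subset_empty.mp hsub
          · have hc1' : (G.neighborFinset w \ D).card = 1 := by omega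
            obtain ⟨u, hu, hu1⟩ := claim1 w hwD hc1'
            have humem : u ∈ G.neighborFinset w \ D := by
              rw [hu]; exact Finset.mem_singleton_self u
            have huU : u ∈ U := by
              rw [hUdef]
              refine Finset.mem_filter.mpr ⟨mem_univ _, (Finset.mem_sdiff.mp humem).2, hu1,
                w, hwD, (SimpleGraph.mem_neighborFinset _ _ _).mp (Finset.mem_sdiff.mp humem).1,
                hc1'⟩
            apply Finset.eq_empty_of_forall_notMem
            intro y hy
            have hy' : y ∈ G.neighborFinset w \ D :=
              Finset.sdiff_subset_sdiff (Finset.Subset.refl _) Finset.subset_union_left hy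
            rw [hu] at hy'
            have : y = u := Finset.mem_singleton.mp hy'
            subst this
            exact (Finset.mem_sdiff.mp hy).2 (Finset.mem_union_right _ huU)
        · right
          have heq : G.neighborFinset w \ D2 = G.neighborFinset w \ D := by
            ext y
            simp only [hD2def, Finset.mem_sdiff, Finset.mem_union]
            refine ⟨fun hy => ⟨hy.1, fun hyD => hy.2 (Or.inl hyD)⟩, fun hy => ⟨hy.1, ?_⟩⟩
            rintro (hyD | hyU)
            · exact hy.2 hyD
            · rw [hUdef] at hyU
              obtain ⟨-, -, hy1, d0, hd0, hd0adj, hd0bad⟩ := Finset.mem_filter.mp hyU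
              have hNy : G.neighborFinset y = {w} :=
                nbr_of_leaf G hy1 ((SimpleGraph.mem_neighborFinset _ _ _).mp hy.1).symm
              have : d0 = w := by
                have : d0 ∈ G.neighborFinset y :=
                  (SimpleGraph.mem_neighborFinset _ _ _).mpr hd0adj.symm
                rw [hNy] at this
                exact Finset.mem_singleton.mp this
              subst this
              omega
          rw [heq]
          exact hc
      · -- w is one of the added leaves
        left
        have hwU : w ∈ U := (Finset.mem_union.mp hw).resolve_left hwD
        rw [hUdef] at hwU
        obtain ⟨-, -, hw1, d0, hd0, hd0adj, -⟩ := Finset.mem_filter.mp hwU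
        have hNw : G.neighborFinset w = {d0} := nbr_of_leaf G hw1 hd0adj.symm
        rw [Finset.card_eq_zero]
        apply Finset.eq_empty_of_forall_notMem
        intro y hy
        obtain ⟨hy1, hy2⟩ := Finset.mem_sdiff.mp hy
        rw [hNw] at hy1
        have : y = d0 := Finset.mem_singleton.mp hy1
        subst this
        exact hy2 (Finset.mem_union_left _ hd0)
    -- D2 is a proper subset of the vertex set
    have hne_univ : D2 ≠ univ := by
      intro hEq
      have hvD : v ∈ D := by
        have hvD2 : v ∈ D2 := hEq ▸ mem_univ v
        rcases Finset.mem_union.mp hvD2 with h' | h'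
        · exact h'
        · rw [hUdef] at h'
          exact absurd (Finset.mem_filter.mp h').2.2.1 hdeg'
      have hext0 : ∀ y, y ∈ G.neighborFinset v → y ∈ D := by
        intro y hy
        by_contra hyD
        have hyD2 : y ∈ D2 := hEq ▸ mem_univ y
        have hyU : y ∈ U := (Finset.mem_union.mp hyD2).resolve_left hyD
        rw [hUdef] at hyU
        have hy1 : G.degree y = 1 := (Finset.mem_filter.mp hyU).2.2.1
        have : y ∈ leafNbrs G v := Finset.mem_filter.mpr ⟨hy, hy1⟩
        rw [h0] at this
        exact absurd this (Finset.notMem_empty y)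
      obtain ⟨u0, hu0⟩ := hadj
      have hu0D : u0 ∈ D := hext0 u0 ((SimpleGraph.mem_neighborFinset _ _ _).mpr hu0)
      have hu0v : u0 ≠ v := hu0.ne'
      have herasedom : IsDomSet G (D.erase v) := by
        intro x hx
        by_cases hxv : x = v
        · subst hxv
          exact ⟨u0, Finset.mem_erase.mpr ⟨hu0v, hu0D⟩, hu0.symm⟩
        · have hxD : x ∉ D := fun hxD => hx (Finset.mem_erase.mpr ⟨hxv, hxD⟩)
          obtain ⟨z, hz, hzx⟩ := hdom x hxD
          have hzv : z ≠ v := by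
            rintro rfl
            exact hxD (hext0 x ((SimpleGraph.mem_neighborFinset _ _ _).mpr hzx))
          exact ⟨z, Finset.mem_erase.mpr ⟨hzv, hz⟩, hzx⟩
      refine absurd (hmin _ herasedom) (not_le.mpr (phi_lt_of_card_lt G ?_))
      rw [Finset.card_erase_of_mem hvD]
      have h1 : 0 < D.card := Finset.card_pos.mpr ⟨v, hvD⟩
      omega
    have hlt : D2.card < Fintype.card V := by
      have h1 := Finset.card_lt_card (Finset.ssubset_univ_iff.mpr hne_univ)
      rwa [Finset.card_univ] at h1
    exact absurd (hlb D2 ⟨hdom2, hcert2⟩) (not_le.mpr hlt)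
  · -- Case A : v is a strong support
    obtain ⟨l1, h1, l2, h2, hne⟩ := Finset.one_lt_card.mp hA
    have h1' := Finset.mem_filter.mp h1
    have h2' := Finset.mem_filter.mp h2
    have ha1 : G.Adj v l1 := (SimpleGraph.mem_neighborFinset _ _ _).mp h1'.1
    have ha2 : G.Adj v l2 := (SimpleGraph.mem_neighborFinset _ _ _).mp h2'.1
    have hN1 : G.neighborFinset l1 = {v} := nbr_of_leaf G h1'.2 ha1.symm
    have hN2 : G.neighborFinset l2 = {v} := nbr_of_leaf G h2'.2 ha2.symm
    set D : Finset V := univ \ {l1, l2} with hDdef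
    have hvD : v ∈ D := by
      rw [hDdef]
      refine Finset.mem_sdiff.mpr ⟨mem_univ _, ?_⟩
      simp only [Finset.mem_insert, Finset.mem_singleton]
      push_neg
      exact ⟨ha1.ne, ha2.ne⟩
    have hdomA : IsDomSet G D := by
      intro x hx
      have hx12 : x = l1 ∨ x = l2 := by
        rw [hDdef] at hx
        simp only [Finset.mem_sdiff, mem_univ, true_and, not_not, Finset.mem_insert,
          Finset.mem_singleton] at hx
        tauto
      rcases hx12 with rfl | rfl
      · exact ⟨v, hvD, ha1⟩
      · exact ⟨v, hvD, ha2⟩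
    have hcertA : ∀ w ∈ D, (G.neighborFinset w \ D).card = 0 ∨
        2 ≤ (G.neighborFinset w \ D).card := by
      intro w hw
      have hsd : G.neighborFinset w \ D = (G.neighborFinset w) ∩ {l1, l2} := by
        rw [hDdef]
        ext y
        simp only [Finset.mem_sdiff, Finset.mem_inter, mem_univ, true_and, not_not]
        try tauto
      by_cases hwv : w = v
      · subst hwv
        right
        have hint : G.neighborFinset w ∩ {l1, l2} = {l1, l2} := by
          apply Finset.inter_eq_right.mpr
          intro y hy
          rcases Finset.mem_insert.mp hy with rfl | hy
          · exact h1'.1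
          · rw [Finset.mem_singleton] at hy
            subst hy
            exact h2'.1
        rw [hsd, hint, Finset.card_pair hne]
      · left
        rw [hsd, Finset.card_eq_zero]
        apply Finset.eq_empty_of_forall_notMem
        intro y hy
        obtain ⟨hy1, hy2⟩ := Finset.mem_inter.mp hy
        have hadjwy : G.Adj y w := ((SimpleGraph.mem_neighborFinset _ _ _).mp hy1).symm
        have hwm : w ∈ G.neighborFinset y := (SimpleGraph.mem_neighborFinset _ _ _).mpr hadjwy
        rcases Finset.mem_insert.mp hy2 with rfl | hy2
        · rw [hN1] at hwm
          exact hwv (Finset.mem_singleton.mp hwm)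
        · rw [Finset.mem_singleton] at hy2
          subst hy2
          rw [hN2] at hwm
          exact hwv (Finset.mem_singleton.mp hwm)
    have hcardA : D.card = Fintype.card V - 2 := by
      rw [hDdef, Finset.card_sdiff_of_subset (Finset.subset_univ _), Finset.card_univ,
        Finset.card_pair hne]
    have := hlb D ⟨hdomA, hcertA⟩
    omega
end

section
/- Let G be a finite connected simple graph of order n ≥ 2 and let D be a certified dominating set of G with |D| = γ_cer(G). Then: (a) every vertex v ∈ D all of whose neighbours lie in D is a leaf or a weak support of G; and (b) for every weak support s ∈ D all of whose neighbours lie in D, every non-leaf neighbour w of s satisfies: either w has at least two neighbours outside D, or w lies in D, all neighbours of w lie in D, and w is a weak support of G. -/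
open Finset

variable {V : Type*} [Fintype V] [DecidableEq V]

set_option linter.unusedSectionVars false
variable {G : SimpleGraph V} [DecidableRel G.Adj]

lemma leaf_unique' {l a b : V} (hl : G.degree l = 1) (ha : G.Adj l a) (hb : G.Adj l b) : a = b := by
  have h := Finset.card_le_one.mp (le_of_eq hl)
  exact h a (by simpa using ha) b (by simpa using hb)

lemma no_shadow_strong (D : Finset V) (hD : IsCertDomSet G D)
    (hmin' : ∀ D' : Finset V, IsCertDomSet G D' → D.card ≤ D'.card) :
    ∀ w ∈ D, G.neighborFinset w ⊆ D → ¬ (2 ≤ (leafNbrs G w).card) := by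
  intro w hwD hwN hstr
  obtain ⟨l1, hl1, l2, hl2, hne⟩ := Finset.one_lt_card.mp hstr
  simp only [leafNbrs, Finset.mem_filter, SimpleGraph.mem_neighborFinset] at hl1 hl2
  set D' := D \ {l1, l2} with hD'def
  have hsub : D' ⊆ D := Finset.sdiff_subset
  have hwD' : w ∈ D' := by
    refine Finset.mem_sdiff.mpr ⟨hwD, ?_⟩
    simp only [Finset.mem_insert, Finset.mem_singleton]
    push_neg
    exact ⟨hl1.1.ne, hl2.1.ne⟩
  have hnotin : l1 ∉ D' ∧ l2 ∉ D' := by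
    constructor <;> (intro h; exact (Finset.mem_sdiff.mp h).2 (by simp))
  have key : IsCertDomSet G D' := by
    constructor
    · intro x hx
      by_cases hxD : x ∈ D
      · have hx12 : x = l1 ∨ x = l2 := by
          by_contra hc
          push_neg at hc
          exact hx (Finset.mem_sdiff.mpr ⟨hxD, by simp [hc.1, hc.2]⟩)
        refine ⟨w, hwD', ?_⟩
        rcases hx12 with rfl | rfl
        · exact hl1.1
        · exact hl2.1
      · obtain ⟨u, huD, hadj⟩ := hD.1 x hxD
        refine ⟨u, Finset.mem_sdiff.mpr ⟨huD, ?_⟩, hadj⟩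
        simp only [Finset.mem_insert, Finset.mem_singleton]
        rintro (rfl | rfl)
        · exact hxD (by rw [leaf_unique' hl1.2 hadj hl1.1.symm]; exact hwD)
        · exact hxD (by rw [leaf_unique' hl2.2 hadj hl2.1.symm]; exact hwD)
    · intro z hz
      by_cases hzw : z = w
      · subst hzw
        right
        refine Finset.one_lt_card.mpr ⟨l1, ?_, l2, ?_, hne⟩
        · exact Finset.mem_sdiff.mpr ⟨by simpa using hl1.1, hnotin.1⟩
        · exact Finset.mem_sdiff.mpr ⟨by simpa using hl2.1, hnotin.2⟩
      · have heq : G.neighborFinset z \ D' = G.neighborFinset z \ D := by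
          ext x
          simp only [hD'def, Finset.mem_sdiff, SimpleGraph.mem_neighborFinset,
            Finset.mem_insert, Finset.mem_singleton]
          constructor
          · rintro ⟨hadj, hx⟩
            refine ⟨hadj, fun hxD => hx ⟨hxD, ?_⟩⟩
            rintro (rfl | rfl)
            · exact hzw (leaf_unique' hl1.2 hadj.symm hl1.1.symm)
            · exact hzw (leaf_unique' hl2.2 hadj.symm hl2.1.symm)
          · rintro ⟨hadj, hx⟩
            exact ⟨hadj, fun h => hx h.1⟩
        rw [heq]
        exact hD.2 z (hsub hz)
  have hlt : D'.card < D.card := by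
    refine Finset.card_lt_card ⟨hsub, fun hc => ?_⟩
    exact hnotin.1 (hc (hwN (by simpa using hl1.1)))
  exact absurd (hmin' D' key) (not_le.mpr hlt)
lemma exists_nbr' (hconn : G.Connected) (hcard : 2 ≤ Fintype.card V) (z : V) :
    ∃ y, G.Adj z y := by
  obtain ⟨u, hu⟩ := Fintype.exists_ne_of_one_lt_card (by omega) z
  obtain ⟨p⟩ := hconn.preconnected z u
  cases p with
  | nil => exact absurd rfl hu
  | cons h _ => exact ⟨_, h⟩

lemma main_a (hconn : G.Connected) (hcard : 2 ≤ Fintype.card V)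
    (D : Finset V) (hD : IsCertDomSet G D)
    (hmin' : ∀ D' : Finset V, IsCertDomSet G D' → D.card ≤ D'.card) :
    ∀ v ∈ D, G.neighborFinset v ⊆ D → IsLeaf G v ∨ IsWeakSupport G v := by
  classical
  by_contra hcon
  push_neg at hcon
  obtain ⟨v, hvD, hvN, hvleaf, hvweak⟩ := hcon
  have hnbr : ∀ z : V, ∃ y, G.Adj z y := exists_nbr' hconn hcard
  have hdeg2 : ∀ z : V, ¬ IsLeaf G z → 2 ≤ (G.neighborFinset z).card := by
    intro z hz
    obtain ⟨y, hy⟩ := hnbr z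
    have h1 : 1 ≤ (G.neighborFinset z).card :=
      Finset.card_pos.mpr ⟨y, by simpa using hy⟩
    have h2 : (G.neighborFinset z).card ≠ 1 := hz
    omega
  -- the set of "bad" vertices
  set B : Finset V := D.filter
      (fun b => G.neighborFinset b ⊆ D ∧ ¬ IsLeaf G b ∧ (leafNbrs G b).card = 0) with hBdef
  have hBmem : ∀ b ∈ B, b ∈ D ∧ G.neighborFinset b ⊆ D ∧ ¬ IsLeaf G b ∧
      (leafNbrs G b).card = 0 := by
    intro b hb
    have := Finset.mem_filter.mp hb
    exact ⟨this.1, this.2.1, this.2.2.1, this.2.2.2⟩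
  have hBnoleaf : ∀ b ∈ B, ∀ x, G.Adj b x → ¬ IsLeaf G x := by
    intro b hb x hadj hx
    have h0 := (hBmem b hb).2.2.2
    rw [Finset.card_eq_zero, Finset.filter_eq_empty_iff] at h0
    exact h0 (by simpa using hadj) hx
  have hvB : v ∈ B := by
    have hns := no_shadow_strong D hD hmin' v hvD hvN
    have hw : (leafNbrs G v).card ≠ 1 := hvweak
    refine Finset.mem_filter.mpr ⟨hvD, hvN, hvleaf, by omega⟩
  -- B2 : bad vertices with at least two bad neighbours
  set B2 : Finset V := B.filter (fun b => 2 ≤ (G.neighborFinset b ∩ B).card) with hB2def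
  -- a maximal independent subset I of B2
  set P : Finset (Finset V) :=
      B2.powerset.filter (fun I => ∀ a ∈ I, ∀ b ∈ I, ¬ G.Adj a b) with hPdef
  have hP0 : (∅ : Finset V) ∈ P := by simp [hPdef]
  obtain ⟨I, -, hImax⟩ := P.exists_le_maximal hP0
  have hIP : I ∈ P := hImax.1
  have hIB2 : I ⊆ B2 := Finset.mem_powerset.mp (Finset.mem_filter.mp hIP).1
  have hIind : ∀ a ∈ I, ∀ b ∈ I, ¬ G.Adj a b := (Finset.mem_filter.mp hIP).2
  have hImax' : ∀ x ∈ B2, x ∉ I → ∃ y ∈ I, G.Adj x y := by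
    intro x hx hxI
    by_contra hc
    push_neg at hc
    have hins : insert x I ∈ P := by
      refine Finset.mem_filter.mpr ⟨Finset.mem_powerset.mpr ?_, ?_⟩
      · exact Finset.insert_subset hx hIB2
      · intro a ha b hb
        rcases Finset.mem_insert.mp ha with ha' | ha'
        · subst ha'
          rcases Finset.mem_insert.mp hb with hb' | hb'
          · subst hb'; exact G.irrefl
          · exact hc b hb'
        · rcases Finset.mem_insert.mp hb with hb' | hb'
          · subst hb'; intro h; exact hc a ha' h.symm
          · exact hIind a ha' b hb'
    have := hImax.2 hins (Finset.subset_insert x I)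
    exact hxI (this (Finset.mem_insert_self x I))
  set S : Finset V := B \ I with hSdef
  have hSB : S ⊆ B := Finset.sdiff_subset
  have hSne : S.Nonempty := by
    rw [Finset.sdiff_nonempty]
    intro hBI
    have hvB2 : v ∈ B2 := hIB2 (hBI hvB)
    have h2 : 2 ≤ (G.neighborFinset v ∩ B).card := (Finset.mem_filter.mp hvB2).2
    obtain ⟨y, hy⟩ := Finset.card_pos.mp (lt_of_lt_of_le (by norm_num) h2)
    have hyB : y ∈ B := (Finset.mem_inter.mp hy).2
    have hadj : G.Adj v y := by simpa using (Finset.mem_inter.mp hy).1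
    exact hIind v (hBI hvB) y (hBI hyB) hadj
  -- leaves to be removed
  set L : Finset V := D.filter
      (fun l => G.degree l = 1 ∧ ∃ w, G.Adj l w ∧ ∃ r ∈ S, G.Adj w r) with hLdef
  set D' : Finset V := D \ (S ∪ L) with hD'def
  have hsub : D' ⊆ D := Finset.sdiff_subset
  have hmemD' : ∀ y, y ∈ D → y ∉ S → y ∉ L → y ∈ D' := by
    intro y h1 h2 h3
    refine Finset.mem_sdiff.mpr ⟨h1, ?_⟩
    simp only [Finset.mem_union]
    tauto
  have hnotD'S : ∀ y ∈ S, y ∉ D' := by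
    intro y hy h
    exact (Finset.mem_sdiff.mp h).2 (Finset.mem_union_left _ hy)
  have hnotD'L : ∀ y ∈ L, y ∉ D' := by
    intro y hy h
    exact (Finset.mem_sdiff.mp h).2 (Finset.mem_union_right _ hy)
  have hSnotleaf : ∀ s ∈ S, ¬ IsLeaf G s := fun s hs => (hBmem s (hSB hs)).2.2.1
  have hLleaf : ∀ l ∈ L, IsLeaf G l := fun l hl => (Finset.mem_filter.mp hl).2.1
  -- adjacency to S forbids membership of the neighbour in S-supports etc.
  have hnotL_of_ge2 : ∀ y, 2 ≤ (G.neighborFinset y).card → y ∉ L := by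
    intro y h2 hyL
    have := hLleaf y hyL
    simp only [IsLeaf] at this
    rw [← SimpleGraph.card_neighborFinset_eq_degree] at this
    omega
  have key : IsCertDomSet G D' := by
    constructor
    · -- domination
      intro x hx
      by_cases hxD : x ∈ D
      · have hxSL : x ∈ S ∪ L := by
          by_contra hc
          exact hx (Finset.mem_sdiff.mpr ⟨hxD, hc⟩)
        rcases Finset.mem_union.mp hxSL with hxS | hxL
        · -- x is a removed bad vertex
          have hxB := hSB hxS
          by_cases h2 : 2 ≤ (G.neighborFinset x ∩ B).card
          · have hxB2 : x ∈ B2 := Finset.mem_filter.mpr ⟨hxB, h2⟩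
            have hxI : x ∉ I := (Finset.mem_sdiff.mp hxS).2
            obtain ⟨y, hyI, hadj⟩ := hImax' x hxB2 hxI
            have hyB : y ∈ B := (Finset.mem_filter.mp (hIB2 hyI)).1
            refine ⟨y, hmemD' y (hBmem y hyB).1 ?_ ?_, hadj.symm⟩
            · intro hyS; exact (Finset.mem_sdiff.mp hyS).2 hyI
            · exact hnotL_of_ge2 y (hdeg2 y (hBmem y hyB).2.2.1)
          · have hdx := hdeg2 x (hBmem x hxB).2.2.1
            have hlt : (G.neighborFinset x ∩ B).card < (G.neighborFinset x).card := by
              omega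
            obtain ⟨y, hyN, hyNB⟩ := Finset.not_subset.mp
              (fun hss => absurd (Finset.card_le_card hss) (not_le.mpr hlt))
            have hyB : y ∉ B := fun h => hyNB (Finset.mem_inter.mpr ⟨hyN, h⟩)
            have hadj : G.Adj x y := by simpa using hyN
            have hyD : y ∈ D := (hBmem x hxB).2.1 hyN
            refine ⟨y, hmemD' y hyD (fun hyS => hyB (hSB hyS)) ?_, hadj.symm⟩
            intro hyL
            exact hBnoleaf x hxB y hadj (hLleaf y hyL)
        · -- x is a removed leaf
          obtain ⟨-, hdegx, w, hadj, r, hrS, hwr⟩ := Finset.mem_filter.mp hxL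
          have hwD : w ∈ D := by
            rcases hD.2 x hxD with h0 | h2
            · by_contra hwD
              have hmem : w ∈ G.neighborFinset x \ D :=
                Finset.mem_sdiff.mpr ⟨by simpa using hadj, hwD⟩
              rw [Finset.card_eq_zero] at h0
              simp [h0] at hmem
            · have hle : (G.neighborFinset x \ D).card ≤ (G.neighborFinset x).card :=
                Finset.card_le_card Finset.sdiff_subset
              rw [SimpleGraph.card_neighborFinset_eq_degree, hdegx] at hle
              omega
          have hwS : w ∉ S := fun hwS => hBnoleaf w (hSB hwS) x hadj.symm hdegx
          have hxr : x ≠ r := fun h => hSnotleaf r hrS (by rw [← h]; exact hdegx)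
          have hw2 : 2 ≤ (G.neighborFinset w).card :=
            Finset.one_lt_card.mpr ⟨x, by simpa using hadj.symm, r, by simpa using hwr, hxr⟩
          exact ⟨w, hmemD' w hwD hwS (hnotL_of_ge2 w hw2), hadj.symm⟩
      · -- x was outside D already
        obtain ⟨u, huD, hadj⟩ := hD.1 x hxD
        have hx_u : x ∈ G.neighborFinset u \ D :=
          Finset.mem_sdiff.mpr ⟨by simpa using hadj, hxD⟩
        have h2 : 2 ≤ (G.neighborFinset u \ D).card := by
          rcases hD.2 u huD with h0 | h2
          · rw [Finset.card_eq_zero] at h0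
            simp [h0] at hx_u
          · exact h2
        have huS : u ∉ S := by
          intro huS
          exact hxD ((hBmem u (hSB huS)).2.1 (Finset.mem_sdiff.mp hx_u).1)
        have hu2 : 2 ≤ (G.neighborFinset u).card :=
          le_trans h2 (Finset.card_le_card Finset.sdiff_subset)
        exact ⟨u, hmemD' u huD huS (hnotL_of_ge2 u hu2), hadj⟩
    · -- certification
      intro z hz
      have hzD : z ∈ D := hsub hz
      have hzS : z ∉ S := fun h => hnotD'S z h hz
      have hzL : z ∉ L := fun h => hnotD'L z h hz
      by_cases hzsh : G.neighborFinset z ⊆ D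
      · by_cases hzl : IsLeaf G z
        · -- z is a shadowed leaf
          left
          have hc1 : (G.neighborFinset z).card = 1 := by
            rw [SimpleGraph.card_neighborFinset_eq_degree]; exact hzl
          obtain ⟨a, ha⟩ := Finset.card_eq_one.mp hc1
          have haz : G.Adj z a := by
            have : a ∈ G.neighborFinset z := by rw [ha]; exact Finset.mem_singleton_self a
            simpa using this
          have haD : a ∈ D := hzsh (by rw [ha]; exact Finset.mem_singleton_self a)
          have haS : a ∉ S := fun h => hBnoleaf a (hSB h) z haz.symm hzl
          have haL : a ∉ L := by
            intro haL
            have hal : IsLeaf G a := hLleaf a haL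
            have closed : ∀ x y : V, G.Adj x y → (x = z ∨ x = a) → (y = z ∨ y = a) := by
              rintro x y hxy (rfl | rfl)
              · right
                have : y ∈ ({a} : Finset V) := by rw [← ha]; simpa using hxy
                exact Finset.mem_singleton.mp this
              · left
                have hc1a : (G.neighborFinset x).card = 1 := by
                  rw [SimpleGraph.card_neighborFinset_eq_degree]; exact hal
                have := Finset.card_le_one.mp (le_of_eq hc1a)
                exact this y (by simpa using hxy) z (by simpa using haz.symm)
            have reach : ∀ x y : V, G.Walk x y → (x = z ∨ x = a) → (y = z ∨ y = a) := by
              intro x y p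
              induction p with
              | nil => exact id
              | cons h q ih => intro hx; exact ih (closed _ _ h hx)
            obtain ⟨p⟩ := hconn.preconnected z v
            rcases reach z v p (Or.inl rfl) with h | h
            · exact hvleaf (by rw [h]; exact hzl)
            · exact hvleaf (by rw [h]; exact hal)
          rw [Finset.card_eq_zero, Finset.sdiff_eq_empty_iff_subset, ha,
            Finset.singleton_subset_iff]
          exact hmemD' a haD haS haL
        · by_cases hzw : (leafNbrs G z).card = 1
          · -- z is a shadowed weak support
            obtain ⟨l, hl⟩ := Finset.card_eq_one.mp hzw
            have hlmem : l ∈ leafNbrs G z := by rw [hl]; exact Finset.mem_singleton_self l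
            have hlN : l ∈ G.neighborFinset z := (Finset.mem_filter.mp hlmem).1
            have hladj : G.Adj z l := by simpa using hlN
            have hlleaf : G.degree l = 1 := (Finset.mem_filter.mp hlmem).2
            by_cases hadjS : ∃ r ∈ S, G.Adj z r
            · right
              obtain ⟨r, hrS, hzr⟩ := hadjS
              have hlL : l ∈ L :=
                Finset.mem_filter.mpr ⟨hzsh hlN, hlleaf, z, hladj.symm, r, hrS, hzr⟩
              have hrl : r ≠ l := fun h => hSnotleaf r hrS (by rw [h]; exact hlleaf)
              refine Finset.one_lt_card.mpr ⟨r, ?_, l, ?_, hrl⟩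
              · exact Finset.mem_sdiff.mpr ⟨by simpa using hzr, hnotD'S r hrS⟩
              · exact Finset.mem_sdiff.mpr ⟨hlN, hnotD'L l hlL⟩
            · left
              rw [Finset.card_eq_zero, Finset.sdiff_eq_empty_iff_subset]
              intro y hy
              have hyD : y ∈ D := hzsh hy
              have hyadj : G.Adj z y := by simpa using hy
              refine hmemD' y hyD (fun hyS => hadjS ⟨y, hyS, hyadj⟩) ?_
              intro hyL
              obtain ⟨-, hydeg, w', hyw', r, hrS, hw'r⟩ := Finset.mem_filter.mp hyL
              have hwz : w' = z := leaf_unique' hydeg hyw' hyadj.symm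
              exact hadjS ⟨r, hrS, hwz ▸ hw'r⟩
          · -- z is a shadowed bad vertex, hence in I
            have hz0 : (leafNbrs G z).card = 0 := by
              have := no_shadow_strong D hD hmin' z hzD hzsh
              omega
            have hzB : z ∈ B := Finset.mem_filter.mpr ⟨hzD, hzsh, hzl, hz0⟩
            have hzI : z ∈ I := by
              by_contra h
              exact hzS (Finset.mem_sdiff.mpr ⟨hzB, h⟩)
            have hzB2 : z ∈ B2 := hIB2 hzI
            have h2 : 2 ≤ (G.neighborFinset z ∩ B).card := (Finset.mem_filter.mp hzB2).2
            right
            refine le_trans h2 (Finset.card_le_card ?_)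
            intro y hy
            obtain ⟨hyN, hyB⟩ := Finset.mem_inter.mp hy
            have hyI : y ∉ I := fun hyI => hIind z hzI y hyI (by simpa using hyN)
            exact Finset.mem_sdiff.mpr ⟨hyN, hnotD'S y (Finset.mem_sdiff.mpr ⟨hyB, hyI⟩)⟩
      · -- z is not shadowed
        right
        rcases hD.2 z hzD with h0 | h2
        · exact absurd (Finset.sdiff_eq_empty_iff_subset.mp (Finset.card_eq_zero.mp h0)) hzsh
        · exact le_trans h2 (Finset.card_le_card (Finset.sdiff_subset_sdiff le_rfl hsub))
  have hlt : D'.card < D.card := by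
    obtain ⟨s, hs⟩ := hSne
    refine Finset.card_lt_card ⟨hsub, fun hc => ?_⟩
    exact hnotD'S s hs (hc (hBmem s (hSB hs)).1)
  exact absurd (hmin' D' key) (not_le.mpr hlt)

theorem shadowed_vertices_structure (G : SimpleGraph V) [DecidableRel G.Adj]
    (hconn : G.Connected) (hcard : 2 ≤ Fintype.card V)
    (D : Finset V) (hD : IsCertDomSet G D) (hmin : D.card = gammaCer G) :
    (∀ v ∈ D, G.neighborFinset v ⊆ D → IsLeaf G v ∨ IsWeakSupport G v) ∧
    (∀ s ∈ D, G.neighborFinset s ⊆ D → IsWeakSupport G s →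
      ∀ w ∈ G.neighborFinset s, ¬ IsLeaf G w →
        2 ≤ (G.neighborFinset w \ D).card ∨
          (w ∈ D ∧ G.neighborFinset w ⊆ D ∧ IsWeakSupport G w)) := by
  have hmin' : ∀ D' : Finset V, IsCertDomSet G D' → D.card ≤ D'.card := by
    intro D' hD'
    rw [hmin]
    exact Nat.sInf_le ⟨D', hD', rfl⟩
  have ha := main_a hconn hcard D hD hmin'
  refine ⟨ha, ?_⟩
  intro s hsD hsN hsw w hw hwl
  have hwD : w ∈ D := hsN hw
  rcases hD.2 w hwD with h0 | h2
  · right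
    have hsub : G.neighborFinset w ⊆ D :=
      Finset.sdiff_eq_empty_iff_subset.mp (Finset.card_eq_zero.mp h0)
    rcases ha w hwD hsub with hl | hws
    · exact absurd hl hwl
    · exact ⟨hwD, hsub, hws⟩
  · exact Or.inl h2
end
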